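/- arXiv:2208.03529 — 9 statements merged into one kernel-verified Lean document; each statement's English description precedes it below -/
import Mathlib

section
/- Let S = S(G, g, R, p) and S' = S(G', g', R', q) be two cone-represented sets in ℝ^n for the same closed convex cone K ⊆ ℝ^l, whose base sets {y : g − G y ∈ K} and {y : g' − G' y ∈ K} are nonempty and compact and strictly feasible. Define dist(S, S') = inf{‖z₁ − z₂‖₂ : z₁ ∈ S, z₂ ∈ S'}. Then dist(S, S') > 0 if and only if there exist λ, ν ∈ K* such that −⟨λ, G Rᵀ (p − q) + g⟩ − ⟨ν, g'⟩ > 0, ‖R Gᵀ λ‖₂ ≤ 1, and R Gᵀ λ = −R' G'ᵀ ν. -/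
open Matrix

/-- Euclidean (ℓ2) norm on `Fin m → ℝ`. -/
noncomputable def e2norm {m : ℕ} (x : Fin m → ℝ) : ℝ := Real.sqrt (∑ i, (x i) ^ 2)

/-- Dual cone of a set `K ⊆ ℝ^l`. -/
def dualCone {l : ℕ} (K : Set (Fin l → ℝ)) : Set (Fin l → ℝ) :=
  {y | ∀ x ∈ K, 0 ≤ y ⬝ᵥ x}

/-- The cone-represented set `S(G, g, R, p) = {z | ∃ y, g − G y ∈ K, z = R y + p}`. -/
def coneSet {n l : ℕ} (K : Set (Fin l → ℝ)) (G : Matrix (Fin l) (Fin n) ℝ)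
    (g : Fin l → ℝ) (R : Matrix (Fin n) (Fin n) ℝ) (p : Fin n → ℝ) : Set (Fin n → ℝ) :=
  {z | ∃ y, g - G *ᵥ y ∈ K ∧ z = R *ᵥ y + p}

/-!
If the two sets are at positive distance they are disjoint, compact and convex, so some `a` with
`‖a‖₂ ≤ 1` strictly separates them: `a ⬝ᵥ z ≤ u` on `S` and `v ≤ a ⬝ᵥ z` on `S'` with `u < v`.
Pulled back along `y ↦ R y + p`, each bound is a linear inequality valid on a strictly feasible
conic system, and conic duality under Slater's condition turns it into a certificate `λ ∈ K*` with
`Gᵀ λ = Rᵀ a` (and `ν ∈ K*` with `G'ᵀ ν = -R'ᵀ a`); since `R Rᵀ = 1`, the dual objective is then at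
least `v - u`. Conversely, for a dual feasible pair, weak duality bounds the dual objective by
`a ⬝ᵥ (z₂ - z₁)` with `a = R Gᵀ λ`, and Cauchy–Schwarz bounds that by `‖z₁ - z₂‖₂`.
-/

section Euclidean

variable {m : ℕ}

lemma e2norm_eq_norm_toLp (x : Fin m → ℝ) : e2norm x = ‖WithLp.toLp 2 x‖ := by
  simp [e2norm, EuclideanSpace.norm_eq, sq_abs]

lemma abs_dotProduct_le_e2norm_mul (a x : Fin m → ℝ) : |a ⬝ᵥ x| ≤ e2norm a * e2norm x := by
  rw [e2norm_eq_norm_toLp, e2norm_eq_norm_toLp, dotProduct_comm]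
  exact abs_real_inner_le_norm (WithLp.toLp 2 a) (WithLp.toLp 2 x)

lemma e2norm_smul_of_nonneg {c : ℝ} (hc : 0 ≤ c) (x : Fin m → ℝ) :
    e2norm (c • x) = c * e2norm x := by
  rw [e2norm_eq_norm_toLp, e2norm_eq_norm_toLp, WithLp.toLp_smul, norm_smul,
    Real.norm_of_nonneg hc]

end Euclidean

lemma StrongDual.exists_eq_dotProduct {ι : Type*} [Fintype ι] (f : StrongDual ℝ (ι → ℝ)) :
    ∃ a : ι → ℝ, ∀ x, f x = a ⬝ᵥ x := by
  classical
  refine ⟨fun i => f fun j => if i = j then 1 else 0, fun x => ?_⟩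
  rw [← ContinuousLinearMap.coe_coe, LinearMap.pi_apply_eq_sum_univ]
  simp [dotProduct, mul_comm]

lemma nonpos_and_nonneg_of_forall_le_mul {x m : ℝ} (h : ∀ s > 0, x ≤ s * m) : x ≤ 0 ∧ 0 ≤ m := by
  have hm : 0 ≤ m := by
    by_contra! hm
    have := h ((|x| + 1) / -m) (div_pos (by positivity) (neg_pos.2 hm))
    rw [div_mul_eq_mul_div, div_neg, mul_div_cancel_right₀ _ hm.ne] at this
    linarith [neg_abs_le x]
  refine ⟨?_, hm⟩
  by_contra! hx
  have hm' : 0 < m := hx.trans_le (by simpa using h 1 one_pos)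
  have := h (x / (2 * m)) (by positivity)
  rw [div_mul_eq_mul_div, mul_div_mul_right _ _ hm'.ne'] at this
  linarith

lemma eq_zero_of_forall_dotProduct_le {ι : Type*} [Fintype ι] {a : ι → ℝ} {C : ℝ}
    (h : ∀ y, a ⬝ᵥ y ≤ C) : a = 0 := by
  have := nonpos_and_nonneg_of_forall_le_mul (x := -C) (m := -(a ⬝ᵥ a)) fun s _ => by
    have := h (s • a)
    rw [dotProduct_smul, smul_eq_mul] at this
    linarith
  exact dotProduct_self_eq_zero.1
    (le_antisymm (by linarith [this.2]) (by simpa using dotProduct_star_self_nonneg a))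

lemma smul_mem_interior_of_cone {E : Type*} [AddCommGroup E] [Module ℝ E] [TopologicalSpace E]
    [ContinuousConstSMul ℝ E] {K : Set E} (hKcone : ∀ c : ℝ, 0 < c → ∀ x ∈ K, c • x ∈ K)
    {c : ℝ} (hc : 0 < c) {x : E} (hx : x ∈ interior K) : c • x ∈ interior K := by
  refine interior_maximal ?_ (isOpenMap_smul₀ hc.ne' _ isOpen_interior) ⟨x, hx, rfl⟩
  rintro _ ⟨y, hy, rfl⟩
  exact hKcone c hc y (interior_subset hy)

lemma dotProduct_mulVec_eq_transpose {m k : Type*} [Fintype m] [Fintype k] (v : m → ℝ)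
    (A : Matrix m k ℝ) (w : k → ℝ) : v ⬝ᵥ (A *ᵥ w) = (Aᵀ *ᵥ v) ⬝ᵥ w := by
  rw [dotProduct_mulVec, mulVec_transpose]

section Slater

variable {ι : Type*} [Fintype ι] {l : ℕ} {K : Set (Fin l → ℝ)} {G : Matrix (Fin l) ι ℝ}
  {g : Fin l → ℝ} {b : ι → ℝ}

variable (K G g b) in
/-- The strict hypograph of the perturbation function `w ↦ sup {b ⬝ᵥ y | g + w - G y ∈ int K}`. -/
def perturbationSet : Set ((Fin l → ℝ) × ℝ) :=
  {w | ∃ y, g - G *ᵥ y + w.1 ∈ interior K ∧ w.2 < b ⬝ᵥ y}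

lemma isOpen_perturbationSet : IsOpen (perturbationSet K G g b) := by
  have : perturbationSet K G g b = ⋃ y, (fun w => g - G *ᵥ y + w.1) ⁻¹' interior K ∩
      {w | w.2 < b ⬝ᵥ y} := by
    ext w
    simp [perturbationSet]
  rw [this]
  exact isOpen_iUnion fun y => (isOpen_interior.preimage (by fun_prop)).inter
    (isOpen_lt continuous_snd continuous_const)

lemma convex_perturbationSet (hKconv : Convex ℝ K) : Convex ℝ (perturbationSet K G g b) := by
  refine convex_iff_pairwise_pos.2 ?_
  rintro w₁ ⟨y₁, hK₁, hb₁⟩ w₂ ⟨y₂, hK₂, hb₂⟩ - s t hs ht hst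
  refine ⟨s • y₁ + t • y₂, ?_, ?_⟩
  · convert hKconv.interior hK₁ hK₂ hs.le ht.le hst using 1
    simp only [Prod.fst_add, Prod.smul_fst, mulVec_add, mulVec_smul]
    linear_combination (norm := module) hst.symm • g
  · simp only [Prod.snd_add, Prod.smul_snd, smul_eq_mul, dotProduct_add, dotProduct_smul]
    nlinarith

lemma mk_zero_notMem_perturbationSet {c : ℝ} (hc : ∀ y, g - G *ᵥ y ∈ K → b ⬝ᵥ y ≤ c) :
    ((0 : Fin l → ℝ), c) ∉ perturbationSet K G g b := by
  rintro ⟨y, hy, hlt⟩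
  rw [add_zero] at hy
  exact (hc y (interior_subset hy)).not_gt hlt

lemma exists_forall_lagrangian_le_of_slater (hKconv : Convex ℝ K)
    (hsf : ∃ y, g - G *ᵥ y ∈ interior K) {c : ℝ} (hc : ∀ y, g - G *ᵥ y ∈ K → b ⬝ᵥ y ≤ c) :
    ∃ lam : Fin l → ℝ, ∀ y, ∀ k ∈ interior K, b ⬝ᵥ y + lam ⬝ᵥ (g - G *ᵥ y) ≤ c + lam ⬝ᵥ k := by
  obtain ⟨y₀, hy₀⟩ := hsf
  obtain ⟨f, hf⟩ := geometric_hahn_banach_open_point (convex_perturbationSet hKconv)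
    isOpen_perturbationSet (mk_zero_notMem_perturbationSet hc)
  obtain ⟨lam₀, hlam₀⟩ := StrongDual.exists_eq_dotProduct (f.comp (.inl ℝ _ ℝ))
  set μ := f (0, 1)
  have hf_apply (w : Fin l → ℝ) (t : ℝ) : f (w, t) = lam₀ ⬝ᵥ w + t * μ := by
    have : (w, t) = (w, 0) + t • ((0 : Fin l → ℝ), (1 : ℝ)) := by simp
    rw [this, map_add, map_smul, ← hlam₀, smul_eq_mul]
    rfl
  have hsep : ∀ y, ∀ k ∈ interior K, ∀ t < b ⬝ᵥ y,
      lam₀ ⬝ᵥ (k - (g - G *ᵥ y)) + t * μ < c * μ := by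
    intro y k hk t ht
    simpa [hf_apply] using hf (k - (g - G *ᵥ y), t) ⟨y, by simpa using hk, ht⟩
  -- The Slater point keeps the separating hyperplane from being vertical.
  have hμ : 0 < μ := by
    have := hsep y₀ _ hy₀ (min (b ⬝ᵥ y₀) c - 1) (by linarith [min_le_left (b ⬝ᵥ y₀) c])
    rw [sub_self, dotProduct_zero, zero_add] at this
    nlinarith [min_le_right (b ⬝ᵥ y₀) c]
  refine ⟨-μ⁻¹ • lam₀, fun y k hk => ?_⟩
  have key : b ⬝ᵥ y ≤ c + (-μ⁻¹ • lam₀) ⬝ᵥ (k - (g - G *ᵥ y)) := le_of_forall_lt fun t ht => by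
    refine lt_of_mul_lt_mul_right ?_ hμ.le
    rw [add_mul, smul_dotProduct, smul_eq_mul, neg_mul, inv_mul_eq_div, neg_mul,
      div_mul_cancel₀ _ hμ.ne']
    linarith [hsep y k hk t ht]
  rw [dotProduct_sub] at key
  linarith

theorem exists_mem_dualCone_of_forall_dotProduct_le (hKconv : Convex ℝ K)
    (hKcone : ∀ c : ℝ, 0 < c → ∀ x ∈ K, c • x ∈ K) (hsf : ∃ y, g - G *ᵥ y ∈ interior K)
    {c : ℝ} (hc : ∀ y, g - G *ᵥ y ∈ K → b ⬝ᵥ y ≤ c) :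
    ∃ lam ∈ dualCone K, Gᵀ *ᵥ lam = b ∧ lam ⬝ᵥ g ≤ c := by
  obtain ⟨lam, hbound⟩ := exists_forall_lagrangian_le_of_slater hKconv hsf hc
  obtain ⟨y₀, hy₀⟩ := hsf
  have hscaled (y : ι → ℝ) (k : Fin l → ℝ) (hk : k ∈ interior K) :
      b ⬝ᵥ y + lam ⬝ᵥ (g - G *ᵥ y) - c ≤ 0 ∧ 0 ≤ lam ⬝ᵥ k :=
    nonpos_and_nonneg_of_forall_le_mul fun s hs => by
      have := hbound y (s • k) (smul_mem_interior_of_cone hKcone hs hk)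
      rw [dotProduct_smul, smul_eq_mul] at this
      linarith
  have hdual : lam ∈ dualCone K := by
    have hK : K ⊆ closure (interior K) :=
      (hKconv.closure_interior_eq_closure_of_nonempty_interior ⟨_, hy₀⟩).symm ▸ subset_closure
    exact fun x hx => closure_minimal (fun k hk => (hscaled 0 k hk).2)
      (isClosed_le continuous_const (continuous_const.dotProduct continuous_id)) (hK hx)
  have hGlam : Gᵀ *ᵥ lam = b := by
    refine (sub_eq_zero.1 (eq_zero_of_forall_dotProduct_le (C := c - lam ⬝ᵥ g) fun y => ?_)).symm
    have := (hscaled y _ hy₀).1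
    rw [dotProduct_sub, dotProduct_mulVec_eq_transpose] at this
    rw [sub_dotProduct]
    linarith
  exact ⟨lam, hdual, hGlam, by simpa using (hscaled 0 _ hy₀).1⟩

end Slater

section ConeSet

variable {n l : ℕ} {K : Set (Fin l → ℝ)} {G : Matrix (Fin l) (Fin n) ℝ} {g : Fin l → ℝ}
  {R : Matrix (Fin n) (Fin n) ℝ} {p : Fin n → ℝ}

lemma convex_coneSet (hKconv : Convex ℝ K) : Convex ℝ (coneSet K G g R p) := by
  rintro _ ⟨y₁, h₁, rfl⟩ _ ⟨y₂, h₂, rfl⟩ s t hs ht hst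
  refine ⟨s • y₁ + t • y₂, ?_, ?_⟩
  · convert hKconv h₁ h₂ hs ht hst using 1
    simp only [mulVec_add, mulVec_smul]
    linear_combination (norm := module) hst.symm • g
  · simp only [mulVec_add, mulVec_smul]
    linear_combination (norm := module) hst • p

lemma isCompact_coneSet (hcpt : IsCompact {y | g - G *ᵥ y ∈ K}) :
    IsCompact (coneSet K G g R p) := by
  have : coneSet K G g R p = (fun y => R *ᵥ y + p) '' {y | g - G *ᵥ y ∈ K} := by
    ext z
    simp [coneSet, eq_comm]
  rw [this]
  exact hcpt.image (by fun_prop)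

lemma dotProduct_sub_le_of_mem_coneSet (hR : Rᵀ * R = 1) {lam : Fin l → ℝ}
    (hlam : lam ∈ dualCone K) {z : Fin n → ℝ} (hz : z ∈ coneSet K G g R p) :
    (R *ᵥ (Gᵀ *ᵥ lam)) ⬝ᵥ (z - p) ≤ lam ⬝ᵥ g := by
  obtain ⟨y, hy, rfl⟩ := hz
  have := hlam _ hy
  rw [add_sub_cancel_right, dotProduct_mulVec_eq_transpose, mulVec_mulVec, hR, one_mulVec,
    ← dotProduct_mulVec_eq_transpose]
  rw [dotProduct_sub] at this
  linarith

lemma exists_mem_dualCone_of_forall_mem_coneSet_dotProduct_le (hKconv : Convex ℝ K)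
    (hKcone : ∀ c : ℝ, 0 < c → ∀ x ∈ K, c • x ∈ K) (hR : R * Rᵀ = 1)
    (hsf : ∃ y, g - G *ᵥ y ∈ interior K) {a : Fin n → ℝ} {u : ℝ}
    (h : ∀ z ∈ coneSet K G g R p, a ⬝ᵥ z ≤ u) :
    ∃ lam ∈ dualCone K, R *ᵥ (Gᵀ *ᵥ lam) = a ∧ lam ⬝ᵥ g ≤ u - a ⬝ᵥ p := by
  obtain ⟨lam, hlam, hGlam, hg⟩ := exists_mem_dualCone_of_forall_dotProduct_le hKconv hKcone hsf
    (b := Rᵀ *ᵥ a) (c := u - a ⬝ᵥ p) fun y hy => by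
      have := h _ ⟨y, hy, rfl⟩
      rw [dotProduct_add, dotProduct_mulVec_eq_transpose] at this
      linarith
  exact ⟨lam, hlam, by rw [hGlam, mulVec_mulVec, hR, one_mulVec], hg⟩

end ConeSet

lemma exists_separating_dotProduct_of_e2norm_le_one {n : ℕ} {S T : Set (Fin n → ℝ)}
    (hSconv : Convex ℝ S) (hScpt : IsCompact S) (hTconv : Convex ℝ T) (hTcl : IsClosed T)
    (hST : Disjoint S T) :
    ∃ a u v, e2norm a ≤ 1 ∧ u < v ∧ (∀ z ∈ S, a ⬝ᵥ z ≤ u) ∧ ∀ z ∈ T, v ≤ a ⬝ᵥ z := by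
  obtain ⟨f, u, v, hS, huv, hT⟩ :=
    geometric_hahn_banach_compact_closed hSconv hScpt hTconv hTcl hST
  obtain ⟨a, ha⟩ := StrongDual.exists_eq_dotProduct f
  -- Dividing by `1 + ‖a‖₂` rather than `‖a‖₂` spares the case `a = 0`.
  have ha₀ : 0 ≤ e2norm a := Real.sqrt_nonneg _
  set r := (1 + e2norm a)⁻¹
  have hr : 0 < r := by positivity
  refine ⟨r • a, r * u, r * v, ?_, mul_lt_mul_of_pos_left huv hr, fun z hz => ?_, fun z hz => ?_⟩
  · rw [e2norm_smul_of_nonneg hr.le]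
    exact inv_mul_le_one_of_le₀ (by linarith) (by positivity)
  · rw [smul_dotProduct, smul_eq_mul, ← ha]
    exact mul_le_mul_of_nonneg_left (hS z hz).le hr.le
  · rw [smul_dotProduct, smul_eq_mul, ← ha]
    exact mul_le_mul_of_nonneg_left (hT z hz).le hr.le

lemma disjoint_of_pos_sInf_e2norm_sub {n : ℕ} {S T : Set (Fin n → ℝ)}
    (h : 0 < sInf {d : ℝ | ∃ z₁ ∈ S, ∃ z₂ ∈ T, d = e2norm (z₁ - z₂)}) : Disjoint S T := by
  refine Set.disjoint_left.2 fun z hz hz' => h.not_ge (csInf_le ⟨0, ?_⟩ ⟨z, hz, z, hz', ?_⟩)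
  · rintro _ ⟨z₁, -, z₂, -, rfl⟩
    exact Real.sqrt_nonneg _
  · simp [e2norm]

lemma dual_objective_le_e2norm_sub {n l : ℕ} {K : Set (Fin l → ℝ)}
    {G G' : Matrix (Fin l) (Fin n) ℝ} {g g' : Fin l → ℝ} {R R' : Matrix (Fin n) (Fin n) ℝ}
    {p q : Fin n → ℝ} (hR : Rᵀ * R = 1) (hR' : R'ᵀ * R' = 1) {lam nu : Fin l → ℝ}
    (hlam : lam ∈ dualCone K) (hnu : nu ∈ dualCone K) (hnorm : e2norm (R *ᵥ (Gᵀ *ᵥ lam)) ≤ 1)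
    (heq : R *ᵥ (Gᵀ *ᵥ lam) = -(R' *ᵥ (G'ᵀ *ᵥ nu))) {z₁ z₂ : Fin n → ℝ}
    (hz₁ : z₁ ∈ coneSet K G g R p) (hz₂ : z₂ ∈ coneSet K G' g' R' q) :
    -(lam ⬝ᵥ (G *ᵥ (Rᵀ *ᵥ (p - q)) + g)) - nu ⬝ᵥ g' ≤ e2norm (z₁ - z₂) := by
  have h₁ := dotProduct_sub_le_of_mem_coneSet hR hlam hz₁
  have h₂ := dotProduct_sub_le_of_mem_coneSet hR' hnu hz₂
  rw [← neg_neg (R' *ᵥ _), ← heq, neg_dotProduct] at h₂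
  have hcs : -((R *ᵥ (Gᵀ *ᵥ lam)) ⬝ᵥ (z₁ - z₂)) ≤ e2norm (z₁ - z₂) :=
    (neg_le_abs _).trans <| (abs_dotProduct_le_e2norm_mul _ _).trans <|
      mul_le_of_le_one_left (Real.sqrt_nonneg _) hnorm
  rw [dotProduct_add, dotProduct_mulVec_eq_transpose, dotProduct_mulVec_eq_transpose,
    transpose_transpose]
  simp only [dotProduct_sub] at *
  linarith

theorem dist_pos_iff_dual_feasible_general {n l : ℕ} (K : Set (Fin l → ℝ))
    (hKconv : Convex ℝ K)
    (hKcone : ∀ c : ℝ, 0 < c → ∀ x ∈ K, c • x ∈ K)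
    (G G' : Matrix (Fin l) (Fin n) ℝ) (g g' : Fin l → ℝ)
    (R R' : Matrix (Fin n) (Fin n) ℝ)
    (hR : R * Rᵀ = 1) (hR' : R' * R'ᵀ = 1)
    (p q : Fin n → ℝ)
    (hne : {y | g - G *ᵥ y ∈ K}.Nonempty)
    (hne' : {y | g' - G' *ᵥ y ∈ K}.Nonempty)
    (hcpt : IsCompact {y | g - G *ᵥ y ∈ K})
    (hcpt' : IsCompact {y | g' - G' *ᵥ y ∈ K})
    (hsf : ∃ y, g - G *ᵥ y ∈ interior K)
    (hsf' : ∃ y, g' - G' *ᵥ y ∈ interior K) :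
    0 < sInf {d : ℝ | ∃ z₁ ∈ coneSet K G g R p, ∃ z₂ ∈ coneSet K G' g' R' q,
        d = e2norm (z₁ - z₂)} ↔
      ∃ lam nu, lam ∈ dualCone K ∧ nu ∈ dualCone K ∧
        0 < -(lam ⬝ᵥ (G *ᵥ (Rᵀ *ᵥ (p - q)) + g)) - nu ⬝ᵥ g' ∧
        e2norm (R *ᵥ (Gᵀ *ᵥ lam)) ≤ 1 ∧
        R *ᵥ (Gᵀ *ᵥ lam) = -(R' *ᵥ (G'ᵀ *ᵥ nu)) := by
  constructor
  · intro hpos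
    obtain ⟨a, u, v, ha, huv, hS, hS'⟩ := exists_separating_dotProduct_of_e2norm_le_one
      (convex_coneSet hKconv) (isCompact_coneSet hcpt) (convex_coneSet hKconv)
      (isCompact_coneSet hcpt').isClosed (disjoint_of_pos_sInf_e2norm_sub hpos)
    obtain ⟨lam, hlam, hlamR, hlamg⟩ :=
      exists_mem_dualCone_of_forall_mem_coneSet_dotProduct_le hKconv hKcone hR hsf hS
    obtain ⟨nu, hnu, hnuR, hnug⟩ :=
      exists_mem_dualCone_of_forall_mem_coneSet_dotProduct_le hKconv hKcone hR' hsf'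
        (a := -a) (u := -v) fun z hz => by simpa using hS' z hz
    refine ⟨lam, nu, hlam, hnu, ?_, hlamR ▸ ha, by rw [hlamR, hnuR, neg_neg]⟩
    rw [dotProduct_add, dotProduct_mulVec_eq_transpose, dotProduct_mulVec_eq_transpose,
      transpose_transpose, hlamR]
    simp only [dotProduct_sub, neg_dotProduct] at *
    linarith
  · rintro ⟨lam, nu, hlam, hnu, hpos, hnorm, heq⟩
    obtain ⟨y₁, hy₁⟩ := hne
    obtain ⟨y₂, hy₂⟩ := hne'
    refine hpos.trans_le (le_csInf ⟨_, _, ⟨y₁, hy₁, rfl⟩, _, ⟨y₂, hy₂, rfl⟩, rfl⟩ ?_)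
    rintro _ ⟨z₁, hz₁, z₂, hz₂, rfl⟩
    exact dual_objective_le_e2norm_sub (mul_eq_one_comm.mp hR) (mul_eq_one_comm.mp hR')
      hlam hnu hnorm heq hz₁ hz₂

theorem dist_pos_iff_dual_feasible {n l : ℕ} (K : Set (Fin l → ℝ))
    (hKclosed : IsClosed K) (hKconv : Convex ℝ K)
    (hKcone : ∀ c : ℝ, 0 < c → ∀ x ∈ K, c • x ∈ K)
    (hKint : (interior K).Nonempty)
    (G G' : Matrix (Fin l) (Fin n) ℝ) (g g' : Fin l → ℝ)
    (R R' : Matrix (Fin n) (Fin n) ℝ)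
    (hR : R * Rᵀ = 1) (hR' : R' * R'ᵀ = 1)
    (p q : Fin n → ℝ)
    (hne : {y | g - G *ᵥ y ∈ K}.Nonempty)
    (hne' : {y | g' - G' *ᵥ y ∈ K}.Nonempty)
    (hcpt : IsCompact {y | g - G *ᵥ y ∈ K})
    (hcpt' : IsCompact {y | g' - G' *ᵥ y ∈ K})
    (hsf : ∃ y, g - G *ᵥ y ∈ interior K)
    (hsf' : ∃ y, g' - G' *ᵥ y ∈ interior K) :
    0 < sInf {d : ℝ | ∃ z₁ ∈ coneSet K G g R p, ∃ z₂ ∈ coneSet K G' g' R' q,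
        d = e2norm (z₁ - z₂)} ↔
      ∃ lam nu, lam ∈ dualCone K ∧ nu ∈ dualCone K ∧
        0 < -(lam ⬝ᵥ (G *ᵥ (Rᵀ *ᵥ (p - q)) + g)) - nu ⬝ᵥ g' ∧
        e2norm (R *ᵥ (Gᵀ *ᵥ lam)) ≤ 1 ∧
        R *ᵥ (Gᵀ *ᵥ lam) = -(R' *ᵥ (G'ᵀ *ᵥ nu)) :=
  dist_pos_iff_dual_feasible_general K hKconv hKcone G G' g g' R R' hR hR' p q hne hne' hcpt hcpt'
    hsf hsf'
end

section
/- Let S = S(G, g, R, p) and S' = S(G', g', R', q) be two cone-represented sets in ℝ^n for the same closed convex cone K ⊆ ℝ^l. Suppose λ, ν ∈ K* satisfy ‖R Gᵀ λ‖₂ ≤ 1, R Gᵀ λ = −R' G'ᵀ ν, and δ := −⟨λ, G Rᵀ (p − q) + g⟩ − ⟨ν, g'⟩ > 0. Then the vector μ = −R Gᵀ λ satisfies ⟨μ, z₁⟩ − ⟨μ, z₂⟩ ≥ δ > 0 for every z₁ ∈ S and z₂ ∈ S'; in particular μ defines a hyperplane strictly separating S from S', and S ∩ S' = ∅. -/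
open Matrix


lemma mulVec_dot {m k : ℕ} (A : Matrix (Fin m) (Fin k) ℝ) (a : Fin k → ℝ) (b : Fin m → ℝ) :
    (A *ᵥ a) ⬝ᵥ b = a ⬝ᵥ (Aᵀ *ᵥ b) := by
  simp only [dotProduct, mulVec, transpose_apply, Finset.sum_mul, Finset.mul_sum]
  rw [Finset.sum_comm]
  apply Finset.sum_congr rfl; intro i _; apply Finset.sum_congr rfl; intro j _; ring

private lemma key {n l : ℕ} (K : Set (Fin l → ℝ))
    (hKclosed : IsClosed K) (hKconv : Convex ℝ K)
    (hKcone : ∀ c : ℝ, 0 < c → ∀ x ∈ K, c • x ∈ K)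
    (hKint : (interior K).Nonempty)
    (G G' : Matrix (Fin l) (Fin n) ℝ) (g g' : Fin l → ℝ)
    (R R' : Matrix (Fin n) (Fin n) ℝ)
    (hR : R * Rᵀ = 1) (hR' : R' * R'ᵀ = 1)
    (p q : Fin n → ℝ)
    (lam nu : Fin l → ℝ) (hlam : ∀ x ∈ K, 0 ≤ lam ⬝ᵥ x) (hnu : ∀ x ∈ K, 0 ≤ nu ⬝ᵥ x)
    (heq : R *ᵥ (Gᵀ *ᵥ lam) = -(R' *ᵥ (G'ᵀ *ᵥ nu)))
    (δ : ℝ) (hδdef : δ = -(lam ⬝ᵥ (G *ᵥ (Rᵀ *ᵥ (p - q)) + g)) - nu ⬝ᵥ g') :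
    ∀ y₁, g - G *ᵥ y₁ ∈ K → ∀ y₂, g' - G' *ᵥ y₂ ∈ K →
        δ ≤ (-(R *ᵥ (Gᵀ *ᵥ lam))) ⬝ᵥ (R *ᵥ y₁ + p) - (-(R *ᵥ (Gᵀ *ᵥ lam))) ⬝ᵥ (R' *ᵥ y₂ + q) := by
  intro y₁ h1 y₂ h2
  have hRt : Rᵀ * R = 1 := mul_eq_one_comm.mp hR
  have hRt' : R'ᵀ * R' = 1 := mul_eq_one_comm.mp hR'
  have k1 : 0 ≤ lam ⬝ᵥ (g - G *ᵥ y₁) := hlam _ h1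
  have k2 : 0 ≤ nu ⬝ᵥ (g' - G' *ᵥ y₂) := hnu _ h2
  set u := R *ᵥ (Gᵀ *ᵥ lam) with hu
  have e1 : u ⬝ᵥ (R *ᵥ y₁) = lam ⬝ᵥ (G *ᵥ y₁) := by
    rw [hu, mulVec_dot, mulVec_mulVec, hRt, one_mulVec, mulVec_dot, transpose_transpose,
      dotProduct_comm]
  have e2 : u ⬝ᵥ (R' *ᵥ y₂) = -(nu ⬝ᵥ (G' *ᵥ y₂)) := by
    rw [heq, neg_dotProduct, mulVec_dot, mulVec_mulVec, hRt', one_mulVec, mulVec_dot,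
      transpose_transpose, dotProduct_comm]
  have e3 : lam ⬝ᵥ (G *ᵥ (Rᵀ *ᵥ (p - q))) = u ⬝ᵥ (p - q) := by
    rw [dotProduct_comm, mulVec_dot, mulVec_dot, transpose_transpose, dotProduct_comm]
  simp only [dotProduct_sub, dotProduct_add, neg_dotProduct, dotProduct_neg] at *
  nlinarith [e1, e2, e3, k1, k2]


theorem dual_feasible_separating_hyperplane {n l : ℕ} (K : Set (Fin l → ℝ))
    (hKclosed : IsClosed K) (hKconv : Convex ℝ K)
    (hKcone : ∀ c : ℝ, 0 < c → ∀ x ∈ K, c • x ∈ K)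
    (hKint : (interior K).Nonempty)
    (G G' : Matrix (Fin l) (Fin n) ℝ) (g g' : Fin l → ℝ)
    (R R' : Matrix (Fin n) (Fin n) ℝ)
    (hR : R * Rᵀ = 1) (hR' : R' * R'ᵀ = 1)
    (p q : Fin n → ℝ)
    (lam nu : Fin l → ℝ) (hlam : lam ∈ dualCone K) (hnu : nu ∈ dualCone K)
    (hnorm : e2norm (R *ᵥ (Gᵀ *ᵥ lam)) ≤ 1)
    (heq : R *ᵥ (Gᵀ *ᵥ lam) = -(R' *ᵥ (G'ᵀ *ᵥ nu)))
    (δ : ℝ) (hδdef : δ = -(lam ⬝ᵥ (G *ᵥ (Rᵀ *ᵥ (p - q)) + g)) - nu ⬝ᵥ g')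
    (hδpos : 0 < δ) :
    (∀ z₁ ∈ coneSet K G g R p, ∀ z₂ ∈ coneSet K G' g' R' q,
        δ ≤ (-(R *ᵥ (Gᵀ *ᵥ lam))) ⬝ᵥ z₁ - (-(R *ᵥ (Gᵀ *ᵥ lam))) ⬝ᵥ z₂) ∧
      coneSet K G g R p ∩ coneSet K G' g' R' q = ∅ := by
  have main : ∀ z₁ ∈ coneSet K G g R p, ∀ z₂ ∈ coneSet K G' g' R' q,
      δ ≤ (-(R *ᵥ (Gᵀ *ᵥ lam))) ⬝ᵥ z₁ - (-(R *ᵥ (Gᵀ *ᵥ lam))) ⬝ᵥ z₂ := by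
    rintro z₁ ⟨y₁, hy₁, rfl⟩ z₂ ⟨y₂, hy₂, rfl⟩
    exact key K hKclosed hKconv hKcone hKint G G' g g' R R' hR hR' p q lam nu hlam hnu heq δ hδdef y₁ hy₁ y₂ hy₂
  refine ⟨main, ?_⟩
  ext z
  simp only [Set.mem_inter_iff, Set.mem_empty_iff_false, iff_false, not_and]
  intro h1 h2
  have := main z h1 z h2
  simp at this
  linarith
end

section
/- Let S = S(G, g, R, p) and S' = S(G', g', R', q) be two cone-represented sets in ℝ^n for the same closed convex cone K ⊆ ℝ^l, whose base sets {y : g − G y ∈ K} and {y : g' − G' y ∈ K} are nonempty and compact and strictly feasible. Then strong duality holds for the distance problem: inf{‖z₁ − z₂‖₂ : z₁ ∈ S, z₂ ∈ S'} = sup{ −⟨λ, G Rᵀ p + g⟩ − ⟨ν, G' R'ᵀ q + g'⟩ : λ, ν ∈ K*, ‖R Gᵀ λ‖₂ ≤ 1, ‖R' G'ᵀ ν‖₂ ≤ 1, R Gᵀ λ + R' G'ᵀ ν = 0 }. -/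
open Matrix Pointwise

lemma e2norm_nonneg {m : ℕ} (x : Fin m → ℝ) : 0 ≤ e2norm x := Real.sqrt_nonneg _

lemma e2norm_eq_sqrt_dot {m : ℕ} (x : Fin m → ℝ) : e2norm x = Real.sqrt (x ⬝ᵥ x) := by
  unfold e2norm dotProduct
  congr 1
  exact Finset.sum_congr rfl fun i _ => sq (x i) ▸ (by ring)

lemma dot_self_nonneg {m : ℕ} (x : Fin m → ℝ) : 0 ≤ x ⬝ᵥ x :=
  Finset.sum_nonneg fun i _ => mul_self_nonneg _

lemma e2norm_sq {m : ℕ} (x : Fin m → ℝ) : e2norm x ^ 2 = x ⬝ᵥ x := by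
  rw [e2norm_eq_sqrt_dot, Real.sq_sqrt (dot_self_nonneg x)]

lemma dot_le_e2norm_mul {m : ℕ} (x y : Fin m → ℝ) : x ⬝ᵥ y ≤ e2norm x * e2norm y := by
  unfold e2norm dotProduct
  exact Real.sum_mul_le_sqrt_mul_sqrt _ _ _

lemma e2norm_smul {m : ℕ} (c : ℝ) (x : Fin m → ℝ) : e2norm (c • x) = |c| * e2norm x := by
  unfold e2norm
  rw [← Real.sqrt_sq_eq_abs, ← Real.sqrt_mul (sq_nonneg c), Finset.mul_sum]
  congr 1
  exact Finset.sum_congr rfl fun i _ => by simp [mul_pow]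

lemma e2norm_neg {m : ℕ} (x : Fin m → ℝ) : e2norm (-x) = e2norm x := by
  unfold e2norm
  simp

lemma e2norm_sub_comm {m : ℕ} (x y : Fin m → ℝ) : e2norm (x - y) = e2norm (y - x) := by
  rw [← e2norm_neg, neg_sub]

lemma lin_nonpos_of_forall_lt {C D α : ℝ} (h : ∀ s : ℝ, 0 < s → C + s * D < α) : D ≤ 0 := by
  by_contra hD
  push_neg at hD
  have hs : (α - C) / D ≤ max 1 ((α - C) / D) := le_max_right _ _
  have h2 : α - C ≤ max 1 ((α - C) / D) * D := by rwa [div_le_iff₀ hD] at hs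
  have := h _ (lt_of_lt_of_le one_pos (le_max_left 1 ((α - C) / D)))
  linarith

lemma le_of_forall_sub_lt {L D β : ℝ} (hD : 0 ≤ D) (h : ∀ s : ℝ, 0 < s → L - s * D < β) :
    L ≤ β := by
  rcases eq_or_lt_of_le hD with hD0 | hD0
  · have := h 1 one_pos; rw [← hD0] at this; linarith
  · by_contra h'
    push_neg at h'
    have hs : (0:ℝ) < (L - β) / (2 * D) := div_pos (by linarith) (by positivity)
    have hsd : (L - β) / (2 * D) * D = (L - β) / 2 := by field_simp
    have := h _ hs
    rw [hsd] at this
    linarith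

lemma nonneg_of_forall_small {L M : ℝ} (h : ∀ t : ℝ, 0 < t → t < 1 → 0 ≤ L + t * M) : 0 ≤ L := by
  by_contra h'
  push_neg at h'
  set t := min (1/2 : ℝ) (-L / (2 * (|M| + 1))) with ht
  have habs : (0:ℝ) < |M| + 1 := by positivity
  have ht0 : 0 < t := lt_min (by norm_num) (div_pos (by linarith) (by positivity))
  have ht1 : t < 1 := lt_of_le_of_lt (min_le_left _ _) (by norm_num)
  have h2 : t ≤ -L / (2 * (|M| + 1)) := min_le_right _ _
  have h3 : t * (|M| + 1) ≤ -L / 2 :=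
    calc t * (|M| + 1) ≤ (-L / (2 * (|M| + 1))) * (|M| + 1) :=
          mul_le_mul_of_nonneg_right h2 habs.le
      _ = -L / 2 := by field_simp
  have h4 : t * M ≤ t * (|M| + 1) :=
    mul_le_mul_of_nonneg_left (by linarith [le_abs_self M]) ht0.le
  have := h t ht0 ht1
  linarith

lemma adj_dot {a b : ℕ} (M : Matrix (Fin a) (Fin b) ℝ) (v : Fin b → ℝ) (z : Fin a → ℝ) :
    (M *ᵥ v) ⬝ᵥ z = v ⬝ᵥ (Mᵀ *ᵥ z) := by
  rw [dotProduct_comm, dotProduct_mulVec, ← mulVec_transpose, dotProduct_comm]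

lemma dot_expand {m : ℕ} (x y : Fin m → ℝ) (t : ℝ) :
    (x + t • y) ⬝ᵥ (x + t • y) = x ⬝ᵥ x + 2 * t * (x ⬝ᵥ y) + t ^ 2 * (y ⬝ᵥ y) := by
  simp only [dotProduct_add, add_dotProduct, dotProduct_smul, smul_dotProduct, smul_eq_mul]
  rw [dotProduct_comm y x]
  ring

lemma coneSet_convex {n l : ℕ} (K : Set (Fin l → ℝ)) (hKconv : Convex ℝ K)
    (G : Matrix (Fin l) (Fin n) ℝ) (g : Fin l → ℝ) (R : Matrix (Fin n) (Fin n) ℝ)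
    (p : Fin n → ℝ) : Convex ℝ (coneSet K G g R p) := by
  rintro z₁ ⟨y₁, hy₁, rfl⟩ z₂ ⟨y₂, hy₂, rfl⟩ a b ha hb hab
  refine ⟨a • y₁ + b • y₂, ?_, ?_⟩
  · have heq : g - G *ᵥ (a • y₁ + b • y₂) = a • (g - G *ᵥ y₁) + b • (g - G *ᵥ y₂) := by
      rw [mulVec_add, mulVec_smul, mulVec_smul]
      funext i
      simp only [Pi.add_apply, Pi.sub_apply, Pi.smul_apply, smul_eq_mul]
      linear_combination g i * hab.symm
    rw [heq]
    exact hKconv hy₁ hy₂ ha hb hab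
  · rw [mulVec_add, mulVec_smul, mulVec_smul]
    funext i
    simp only [Pi.add_apply, Pi.smul_apply, smul_eq_mul]
    linear_combination p i * hab

lemma coneSet_eq_image {n l : ℕ} (K : Set (Fin l → ℝ)) (G : Matrix (Fin l) (Fin n) ℝ)
    (g : Fin l → ℝ) (R : Matrix (Fin n) (Fin n) ℝ) (p : Fin n → ℝ) :
    coneSet K G g R p = (fun y => R *ᵥ y + p) '' {y | g - G *ᵥ y ∈ K} := by
  ext z
  constructor
  · rintro ⟨y, hy, rfl⟩; exact ⟨y, hy, rfl⟩
  · rintro ⟨y, hy, rfl⟩; exact ⟨y, hy, rfl⟩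

lemma affine_continuous {n : ℕ} (R : Matrix (Fin n) (Fin n) ℝ) (p : Fin n → ℝ) :
    Continuous fun y : Fin n → ℝ => R *ᵥ y + p := by
  have h1 : Continuous fun y : Fin n → ℝ => R *ᵥ y := by
    have := LinearMap.continuous_of_finiteDimensional (R.mulVecLin)
    simpa only [Matrix.coe_mulVecLin] using this
  exact h1.add continuous_const

lemma conic_farkas {n l : ℕ} (K : Set (Fin l → ℝ)) (hKconv : Convex ℝ K)
    (hKcone : ∀ c : ℝ, 0 < c → ∀ x ∈ K, c • x ∈ K)
    (G : Matrix (Fin l) (Fin n) ℝ) (g : Fin l → ℝ)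
    (hsf : ∃ y, g - G *ᵥ y ∈ interior K)
    (c : Fin n → ℝ) (β : ℝ) (hβ : ∀ y, g - G *ᵥ y ∈ K → c ⬝ᵥ y ≤ β) :
    ∃ lam, lam ∈ dualCone K ∧ Gᵀ *ᵥ lam = c ∧ lam ⬝ᵥ g ≤ β := by
  classical
  obtain ⟨yh, hyh⟩ := hsf
  set kh : Fin l → ℝ := g - G *ᵥ yh with hkh
  set A : Set ((Fin l → ℝ) × ℝ) :=
    {ur | ∃ y : Fin n → ℝ, g - G *ᵥ y - ur.1 ∈ interior K ∧ ur.2 < c ⬝ᵥ y} with hAdef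
  have hAopen : IsOpen A := by
    have : A = ⋃ y : Fin n → ℝ,
        ((fun u : Fin l → ℝ => g - G *ᵥ y - u) ⁻¹' interior K) ×ˢ Set.Iio (c ⬝ᵥ y) := by
      ext ⟨u, r⟩
      simp only [hAdef, Set.mem_setOf_eq, Set.mem_iUnion, Set.mem_prod, Set.mem_preimage,
        Set.mem_Iio]
    rw [this]
    refine isOpen_iUnion fun y => IsOpen.prod ?_ isOpen_Iio
    refine isOpen_interior.preimage ?_
    exact (continuous_const.sub continuous_id)
  have hAconv : Convex ℝ A := by
    rintro ⟨u₁, r₁⟩ ⟨y₁, hk₁, hr₁⟩ ⟨u₂, r₂⟩ ⟨y₂, hk₂, hr₂⟩ a b ha hb hab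
    refine ⟨a • y₁ + b • y₂, ?_, ?_⟩
    · have heq : g - G *ᵥ (a • y₁ + b • y₂) - (a • (u₁, r₁) + b • (u₂, r₂)).1
          = a • (g - G *ᵥ y₁ - u₁) + b • (g - G *ᵥ y₂ - u₂) := by
        simp only [Prod.fst_add, Prod.smul_fst, mulVec_add, mulVec_smul]
        funext i
        simp only [Pi.add_apply, Pi.sub_apply, Pi.smul_apply, smul_eq_mul]
        linear_combination g i * hab.symm
      rw [heq]
      exact hKconv.interior hk₁ hk₂ ha hb hab
    · have hc : c ⬝ᵥ (a • y₁ + b • y₂) = a * (c ⬝ᵥ y₁) + b * (c ⬝ᵥ y₂) := by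
        rw [dotProduct_add, dotProduct_smul, dotProduct_smul, smul_eq_mul, smul_eq_mul]
      have hab' : 0 < a ∨ 0 < b := by
        by_contra hcon
        push_neg at hcon
        have : a = 0 := le_antisymm hcon.1 ha
        have : b = 0 := le_antisymm hcon.2 hb
        simp_all
      have h₁ : a * r₁ ≤ a * (c ⬝ᵥ y₁) := mul_le_mul_of_nonneg_left hr₁.le ha
      have h₂ : b * r₂ ≤ b * (c ⬝ᵥ y₂) := mul_le_mul_of_nonneg_left hr₂.le hb
      show (a • (u₁, r₁) + b • (u₂, r₂)).2 < _
      simp only [Prod.snd_add, Prod.smul_snd, smul_eq_mul, hc]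
      rcases hab' with hpos | hpos
      · have := mul_lt_mul_of_pos_left hr₁ hpos; linarith
      · have := mul_lt_mul_of_pos_left hr₂ hpos; linarith
  have hBconv : Convex ℝ (({(0 : Fin l → ℝ)} : Set (Fin l → ℝ)) ×ˢ Set.Ici β) :=
    (convex_singleton _).prod (convex_Ici _)
  have hdisj : Disjoint A (({(0 : Fin l → ℝ)} : Set (Fin l → ℝ)) ×ˢ Set.Ici β) := by
    rw [Set.disjoint_left]
    rintro ⟨u, r⟩ ⟨y, hk, hr⟩ ⟨hu, hrB⟩
    simp only [Set.mem_singleton_iff] at hu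
    rw [hu, sub_zero] at hk
    have := hβ y (interior_subset hk)
    simp only [Set.mem_Ici] at hrB
    dsimp at hr hrB
    linarith
  obtain ⟨f, α, hfA, hfB⟩ := geometric_hahn_banach_open hAconv hAopen hBconv hdisj
  set lam : Fin l → ℝ := fun i => f (Pi.single i 1, 0) with hlamdef
  set μ : ℝ := f (0, 1) with hμdef
  have hf : ∀ (u : Fin l → ℝ) (r : ℝ), f (u, r) = lam ⬝ᵥ u + μ * r := by
    intro u r
    have hsingle : ∀ i, u i • (Pi.single i (1:ℝ) : Fin l → ℝ) = Pi.single i (u i) := fun i => by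
      rw [← Pi.single_smul, smul_eq_mul, mul_one]
    have h1 : ((u, r) : (Fin l → ℝ) × ℝ)
        = (∑ i, u i • ((Pi.single i 1 : Fin l → ℝ), (0:ℝ))) + r • ((0 : Fin l → ℝ), (1:ℝ)) := by
      refine Prod.ext ?_ ?_
      · simp only [Prod.fst_add, Prod.smul_fst, Prod.fst_sum, smul_zero, add_zero]
        simp_rw [hsingle]
        exact (Finset.univ_sum_single u).symm
      · simp only [Prod.snd_add, Prod.smul_snd, Prod.snd_sum, smul_zero, smul_eq_mul, mul_one,
          mul_zero, Finset.sum_const_zero, zero_add]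
    rw [h1, map_add, map_sum]
    simp only [ContinuousLinearMap.map_smul, smul_eq_mul]
    rw [dotProduct]
    congr 1
    · exact Finset.sum_congr rfl fun i _ => mul_comm _ _
    · exact mul_comm _ _
  have hAineq : ∀ (y : Fin n → ℝ) (k : Fin l → ℝ) (t : ℝ), k ∈ interior K → 0 < t →
      lam ⬝ᵥ (g - G *ᵥ y - k) + μ * (c ⬝ᵥ y - t) < α := by
    intro y k t hk ht
    have hmem : ((g - G *ᵥ y - k, c ⬝ᵥ y - t) : (Fin l → ℝ) × ℝ) ∈ A := by
      refine ⟨y, ?_, ?_⟩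
      · simpa [sub_sub_cancel] using hk
      · dsimp; linarith
    have := hfA _ hmem
    rwa [hf] at this
  have hBineq : α ≤ μ * β := by
    have hmem : ((0, β) : (Fin l → ℝ) × ℝ) ∈ ({(0 : Fin l → ℝ)} : Set (Fin l → ℝ)) ×ˢ Set.Ici β :=
      ⟨rfl, le_refl β⟩
    have := hfB _ hmem
    rwa [hf, dotProduct_zero, zero_add] at this
  have hintscale : ∀ s : ℝ, 0 < s → ∀ k ∈ interior K, s • k ∈ interior K := by
    intro s hs k hk
    have hopen : IsOpen (s • interior K) := isOpen_interior.smul₀ (ne_of_gt hs)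
    have hsub : s • interior K ⊆ K := by
      rintro _ ⟨x, hx, rfl⟩
      exact hKcone s hs x (interior_subset hx)
    exact interior_maximal hsub hopen (Set.smul_mem_smul_set hk)
  have hzero : g - G *ᵥ yh - kh = 0 := by rw [hkh]; abel
  have hμ : 0 ≤ μ := by
    have h' : ∀ t : ℝ, 0 < t → μ * (c ⬝ᵥ yh) + t * (-μ) < α := by
      intro t ht
      have := hAineq yh kh t hyh ht
      rw [hzero, dotProduct_zero] at this
      linarith
    linarith [lin_nonpos_of_forall_lt h']
  have hμpos : 0 < μ := by
    rcases eq_or_lt_of_le hμ with h0 | h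
    · exfalso
      have h1 := hAineq yh kh 1 hyh one_pos
      rw [hzero, dotProduct_zero, ← h0] at h1
      rw [← h0] at hBineq
      simp at h1
      linarith
    · exact h
  have hlamIntK : ∀ k ∈ interior K, 0 ≤ lam ⬝ᵥ k := by
    intro k hk
    have h' : ∀ s : ℝ, 0 < s →
        (lam ⬝ᵥ (g - G *ᵥ yh) + μ * (c ⬝ᵥ yh - 1)) + s * (-(lam ⬝ᵥ k)) < α := by
      intro s hs
      have := hAineq yh (s • k) 1 (hintscale s hs k hk) one_pos
      rw [dotProduct_sub, dotProduct_smul, smul_eq_mul] at this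
      linarith
    linarith [lin_nonpos_of_forall_lt h']
  have hlamK : lam ∈ dualCone K := by
    intro x hx
    refine nonneg_of_forall_small (M := lam ⬝ᵥ kh - lam ⬝ᵥ x) ?_
    intro t h0 h1
    have hmem : (1 - t) • x + t • kh ∈ interior K :=
      hKconv.openSegment_self_interior_subset_interior hx hyh
        ⟨1 - t, t, by linarith, h0, by ring, rfl⟩
    have := hlamIntK _ hmem
    rw [dotProduct_add, dotProduct_smul, dotProduct_smul, smul_eq_mul, smul_eq_mul] at this
    nlinarith [this]
  have hkey : ∀ y, lam ⬝ᵥ (g - G *ᵥ y) + μ * (c ⬝ᵥ y) ≤ μ * β := by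
    intro y
    have hle : lam ⬝ᵥ (g - G *ᵥ y) + μ * (c ⬝ᵥ y) ≤ α := by
      refine le_of_forall_sub_lt (D := lam ⬝ᵥ kh + μ)
        (add_nonneg (hlamIntK _ hyh) hμ) ?_
      intro s hs
      have := hAineq y (s • kh) s (hintscale s hs _ hyh) hs
      rw [dotProduct_sub, dotProduct_smul, smul_eq_mul] at this
      linarith
    linarith
  have hGlam : Gᵀ *ᵥ lam = μ • c := by
    set w : Fin n → ℝ := μ • c - Gᵀ *ᵥ lam with hwdef
    have hwy : ∀ y, w ⬝ᵥ y ≤ μ * β - lam ⬝ᵥ g := by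
      intro y
      have hk := hkey y
      rw [dotProduct_sub] at hk
      have hGy : lam ⬝ᵥ (G *ᵥ y) = (Gᵀ *ᵥ lam) ⬝ᵥ y := by
        rw [dotProduct_mulVec, mulVec_transpose]
      rw [hwdef, sub_dotProduct, smul_dotProduct, smul_eq_mul]
      rw [hGy] at hk
      linarith
    have hww : w ⬝ᵥ w ≤ 0 := by
      by_contra h'
      push_neg at h'
      have h2 := hwy (((μ * β - lam ⬝ᵥ g + 1) / (w ⬝ᵥ w)) • w)
      rw [dotProduct_smul, smul_eq_mul, div_mul_cancel₀ _ (ne_of_gt h')] at h2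
      linarith
    have hw0 : w = 0 := dotProduct_self_eq_zero.mp (le_antisymm hww (dot_self_nonneg w))
    exact (sub_eq_zero.mp hw0).symm
  refine ⟨μ⁻¹ • lam, ?_, ?_, ?_⟩
  · intro x hx
    rw [smul_dotProduct, smul_eq_mul]
    exact mul_nonneg (inv_nonneg.mpr hμ) (hlamK x hx)
  · rw [mulVec_smul, hGlam, smul_smul, inv_mul_cancel₀ (ne_of_gt hμpos), one_smul]
  · have h0 := hkey 0
    rw [mulVec_zero, sub_zero, dotProduct_zero, mul_zero, add_zero] at h0
    rw [smul_dotProduct, smul_eq_mul]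
    have := mul_le_mul_of_nonneg_left h0 (inv_nonneg.mpr hμ)
    rw [← mul_assoc, inv_mul_cancel₀ (ne_of_gt hμpos), one_mul] at this
    linarith


theorem strong_duality_distance {n l : ℕ} (K : Set (Fin l → ℝ))
    (hKclosed : IsClosed K) (hKconv : Convex ℝ K)
    (hKcone : ∀ c : ℝ, 0 < c → ∀ x ∈ K, c • x ∈ K)
    (hKint : (interior K).Nonempty)
    (G G' : Matrix (Fin l) (Fin n) ℝ) (g g' : Fin l → ℝ)
    (R R' : Matrix (Fin n) (Fin n) ℝ)
    (hR : R * Rᵀ = 1) (hR' : R' * R'ᵀ = 1)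
    (p q : Fin n → ℝ)
    (hne : {y | g - G *ᵥ y ∈ K}.Nonempty)
    (hne' : {y | g' - G' *ᵥ y ∈ K}.Nonempty)
    (hcpt : IsCompact {y | g - G *ᵥ y ∈ K})
    (hcpt' : IsCompact {y | g' - G' *ᵥ y ∈ K})
    (hsf : ∃ y, g - G *ᵥ y ∈ interior K)
    (hsf' : ∃ y, g' - G' *ᵥ y ∈ interior K) :
    sInf {d : ℝ | ∃ z₁ ∈ coneSet K G g R p, ∃ z₂ ∈ coneSet K G' g' R' q,
        d = e2norm (z₁ - z₂)} =
      sSup {d : ℝ | ∃ lam nu, lam ∈ dualCone K ∧ nu ∈ dualCone K ∧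
        e2norm (R *ᵥ (Gᵀ *ᵥ lam)) ≤ 1 ∧ e2norm (R' *ᵥ (G'ᵀ *ᵥ nu)) ≤ 1 ∧
        R *ᵥ (Gᵀ *ᵥ lam) + R' *ᵥ (G'ᵀ *ᵥ nu) = 0 ∧
        d = -(lam ⬝ᵥ (G *ᵥ (Rᵀ *ᵥ p) + g)) - nu ⬝ᵥ (G' *ᵥ (R'ᵀ *ᵥ q) + g')} := by
  classical
  have hRtR : Rᵀ * R = 1 := mul_eq_one_comm.mp hR
  have hRtR' : R'ᵀ * R' = 1 := mul_eq_one_comm.mp hR'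
  set S := coneSet K G g R p with hSdef
  set S' := coneSet K G' g' R' q with hS'def
  have hSconv : Convex ℝ S := coneSet_convex K hKconv G g R p
  have hS'conv : Convex ℝ S' := coneSet_convex K hKconv G' g' R' q
  have hScpt : IsCompact S := by
    rw [hSdef, coneSet_eq_image]
    exact hcpt.image (affine_continuous R p)
  have hS'cpt : IsCompact S' := by
    rw [hS'def, coneSet_eq_image]
    exact hcpt'.image (affine_continuous R' q)
  have hSne : S.Nonempty := ⟨R *ᵥ hne.choose + p, hne.choose, hne.choose_spec, rfl⟩
  have hS'ne : S'.Nonempty := ⟨R' *ᵥ hne'.choose + q, hne'.choose, hne'.choose_spec, rfl⟩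
  set φ : ((Fin n → ℝ) × (Fin n → ℝ)) → ℝ := fun z => (z.1 - z.2) ⬝ᵥ (z.1 - z.2) with hφdef
  have hφcont : Continuous φ := by
    show Continuous fun z : ((Fin n → ℝ) × (Fin n → ℝ)) => ∑ i, (z.1 - z.2) i * (z.1 - z.2) i
    refine continuous_finset_sum _ fun i _ => ?_
    have h1 : Continuous fun z : (Fin n → ℝ) × (Fin n → ℝ) => z.1 i :=
      (continuous_apply i).comp continuous_fst
    have h2 : Continuous fun z : (Fin n → ℝ) × (Fin n → ℝ) => z.2 i :=
      (continuous_apply i).comp continuous_snd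
    exact (h1.sub h2).mul (h1.sub h2)
  obtain ⟨ab, habmem, habmin⟩ :=
    (hScpt.prod hS'cpt).exists_isMinOn (hSne.prod hS'ne) hφcont.continuousOn
  obtain ⟨ha, hb⟩ := habmem
  set a := ab.1 with hadef
  set b := ab.2 with hbdef
  set D := e2norm (a - b) with hDdef
  have hDsq : D ^ 2 = (a - b) ⬝ᵥ (a - b) := e2norm_sq _
  have hD0 : 0 ≤ D := e2norm_nonneg _
  have hmin : ∀ z₁ ∈ S, ∀ z₂ ∈ S', (a - b) ⬝ᵥ (a - b) ≤ (z₁ - z₂) ⬝ᵥ (z₁ - z₂) := by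
    intro z₁ h₁ z₂ h₂
    exact isMinOn_iff.mp habmin (z₁, z₂) (Set.mk_mem_prod h₁ h₂)
  have hsep1 : ∀ z₁ ∈ S, 0 ≤ (a - b) ⬝ᵥ (z₁ - a) := by
    intro z₁ h₁
    have h2 : 0 ≤ 2 * ((a - b) ⬝ᵥ (z₁ - a)) := by
      refine nonneg_of_forall_small (M := (z₁ - a) ⬝ᵥ (z₁ - a)) ?_
      intro t ht0 ht1
      have hmem : (1 - t) • a + t • z₁ ∈ S := hSconv ha h₁ (by linarith) ht0.le (by ring)
      have hq := hmin _ hmem b hb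
      have hexp : ((1 - t) • a + t • z₁ - b) = (a - b) + t • (z₁ - a) := by
        funext i
        simp only [Pi.add_apply, Pi.sub_apply, Pi.smul_apply, smul_eq_mul]
        ring
      rw [hexp, dot_expand] at hq
      nlinarith [hq, ht0]
    linarith
  have hsep2 : ∀ z₂ ∈ S', 0 ≤ (b - a) ⬝ᵥ (z₂ - b) := by
    intro z₂ h₂
    have h2 : 0 ≤ 2 * ((a - b) ⬝ᵥ (b - z₂)) := by
      refine nonneg_of_forall_small (M := (b - z₂) ⬝ᵥ (b - z₂)) ?_
      intro t ht0 ht1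
      have hmem : (1 - t) • b + t • z₂ ∈ S' := hS'conv hb h₂ (by linarith) ht0.le (by ring)
      have hq := hmin a ha _ hmem
      have hexp : (a - ((1 - t) • b + t • z₂)) = (a - b) + t • (b - z₂) := by
        funext i
        simp only [Pi.add_apply, Pi.sub_apply, Pi.smul_apply, smul_eq_mul]
        ring
      rw [hexp, dot_expand] at hq
      nlinarith [hq, ht0]
    have hflip : (b - a) ⬝ᵥ (z₂ - b) = (a - b) ⬝ᵥ (b - z₂) := by
      rw [show b - a = -(a - b) from (neg_sub _ _).symm,
        show z₂ - b = -(b - z₂) from (neg_sub _ _).symm, neg_dotProduct, dotProduct_neg, neg_neg]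
    rw [hflip]
    linarith
  have wd : ∀ lam nu : Fin l → ℝ, lam ∈ dualCone K → nu ∈ dualCone K →
      e2norm (R *ᵥ (Gᵀ *ᵥ lam)) ≤ 1 →
      R *ᵥ (Gᵀ *ᵥ lam) + R' *ᵥ (G'ᵀ *ᵥ nu) = 0 →
      ∀ z₁ ∈ S, ∀ z₂ ∈ S',
      -(lam ⬝ᵥ (G *ᵥ (Rᵀ *ᵥ p) + g)) - nu ⬝ᵥ (G' *ᵥ (R'ᵀ *ᵥ q) + g')
        ≤ e2norm (z₁ - z₂) := by
    rintro lam nu hl hn h1 hsum z₁ ⟨y, hy, rfl⟩ z₂ ⟨y', hy', rfl⟩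
    set w := R *ᵥ (Gᵀ *ᵥ lam) with hwdef
    set w' := R' *ᵥ (G'ᵀ *ᵥ nu) with hw'def
    have hfeas : 0 ≤ lam ⬝ᵥ (g - G *ᵥ y) := hl _ hy
    have hfeas' : 0 ≤ nu ⬝ᵥ (g' - G' *ᵥ y') := hn _ hy'
    have e1 : lam ⬝ᵥ (G *ᵥ (Rᵀ *ᵥ p)) = (Gᵀ *ᵥ lam) ⬝ᵥ (Rᵀ *ᵥ p) := by
      rw [dotProduct_mulVec, ← mulVec_transpose]
    have e2 : lam ⬝ᵥ (G *ᵥ y) = (Gᵀ *ᵥ lam) ⬝ᵥ y := by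
      rw [dotProduct_mulVec, ← mulVec_transpose]
    have e1' : nu ⬝ᵥ (G' *ᵥ (R'ᵀ *ᵥ q)) = (G'ᵀ *ᵥ nu) ⬝ᵥ (R'ᵀ *ᵥ q) := by
      rw [dotProduct_mulVec, ← mulVec_transpose]
    have e2' : nu ⬝ᵥ (G' *ᵥ y') = (G'ᵀ *ᵥ nu) ⬝ᵥ y' := by
      rw [dotProduct_mulVec, ← mulVec_transpose]
    have hw1 : w ⬝ᵥ (R *ᵥ y + p) = (Gᵀ *ᵥ lam) ⬝ᵥ y + (Gᵀ *ᵥ lam) ⬝ᵥ (Rᵀ *ᵥ p) := by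
      rw [hwdef, adj_dot, mulVec_add, mulVec_mulVec, hRtR, one_mulVec, dotProduct_add]
    have hw2 : w' ⬝ᵥ (R' *ᵥ y' + q) = (G'ᵀ *ᵥ nu) ⬝ᵥ y' + (G'ᵀ *ᵥ nu) ⬝ᵥ (R'ᵀ *ᵥ q) := by
      rw [hw'def, adj_dot, mulVec_add, mulVec_mulVec, hRtR', one_mulVec, dotProduct_add]
    have hww' : w' = -w := eq_neg_of_add_eq_zero_right hsum
    have hdsub : lam ⬝ᵥ (g - G *ᵥ y) = lam ⬝ᵥ g - lam ⬝ᵥ (G *ᵥ y) := dotProduct_sub _ _ _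
    have hdsub' : nu ⬝ᵥ (g' - G' *ᵥ y') = nu ⬝ᵥ g' - nu ⬝ᵥ (G' *ᵥ y') := dotProduct_sub _ _ _
    have hkey : -(lam ⬝ᵥ (G *ᵥ (Rᵀ *ᵥ p) + g)) - nu ⬝ᵥ (G' *ᵥ (R'ᵀ *ᵥ q) + g')
        ≤ w ⬝ᵥ ((R' *ᵥ y' + q) - (R *ᵥ y + p)) := by
      rw [dotProduct_add, dotProduct_add, e1, e1']
      have hx : w ⬝ᵥ ((R' *ᵥ y' + q) - (R *ᵥ y + p))
          = w ⬝ᵥ (R' *ᵥ y' + q) - w ⬝ᵥ (R *ᵥ y + p) := dotProduct_sub _ _ _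
      have hx2 : w ⬝ᵥ (R' *ᵥ y' + q) = -(w' ⬝ᵥ (R' *ᵥ y' + q)) := by
        rw [hww', neg_dotProduct, neg_neg]
      rw [hx, hx2, hw1, hw2]
      rw [e2] at hdsub
      rw [e2'] at hdsub'
      linarith
    have hCS : w ⬝ᵥ ((R' *ᵥ y' + q) - (R *ᵥ y + p))
        ≤ e2norm w * e2norm ((R' *ᵥ y' + q) - (R *ᵥ y + p)) := dot_le_e2norm_mul _ _
    have hmul : e2norm w * e2norm ((R' *ᵥ y' + q) - (R *ᵥ y + p))
        ≤ 1 * e2norm ((R' *ᵥ y' + q) - (R *ᵥ y + p)) :=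
      mul_le_mul_of_nonneg_right h1 (e2norm_nonneg _)
    have hfl : e2norm ((R' *ᵥ y' + q) - (R *ᵥ y + p))
        = e2norm ((R *ᵥ y + p) - (R' *ᵥ y' + q)) := e2norm_sub_comm _ _
    rw [hfl] at hCS hmul
    linarith
  have hPleast : IsLeast {d : ℝ | ∃ z₁ ∈ S, ∃ z₂ ∈ S', d = e2norm (z₁ - z₂)} D := by
    constructor
    · exact ⟨a, ha, b, hb, rfl⟩
    · rintro x ⟨z₁, h₁, z₂, h₂, rfl⟩
      rw [hDdef, e2norm_eq_sqrt_dot, e2norm_eq_sqrt_dot]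
      exact Real.sqrt_le_sqrt (hmin z₁ h₁ z₂ h₂)
  have hQgreatest : IsGreatest {d : ℝ | ∃ lam nu, lam ∈ dualCone K ∧ nu ∈ dualCone K ∧
      e2norm (R *ᵥ (Gᵀ *ᵥ lam)) ≤ 1 ∧ e2norm (R' *ᵥ (G'ᵀ *ᵥ nu)) ≤ 1 ∧
      R *ᵥ (Gᵀ *ᵥ lam) + R' *ᵥ (G'ᵀ *ᵥ nu) = 0 ∧
      d = -(lam ⬝ᵥ (G *ᵥ (Rᵀ *ᵥ p) + g)) - nu ⬝ᵥ (G' *ᵥ (R'ᵀ *ᵥ q) + g')} D := by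
    constructor
    · rcases eq_or_lt_of_le hD0 with hDzero | hDpos
      · refine ⟨0, 0, ?_, ?_, ?_, ?_, ?_, ?_⟩
        · intro x _; rw [zero_dotProduct]
        · intro x _; rw [zero_dotProduct]
        · simp [mulVec_zero, e2norm]
        · simp [mulVec_zero, e2norm]
        · simp [mulVec_zero]
        · simp only [zero_dotProduct, neg_zero, sub_zero]
          exact hDzero.symm
      · set u : Fin n → ℝ := D⁻¹ • (b - a) with hudef
        have hba : (b - a) = -(a - b) := (neg_sub _ _).symm
        have hbadot : (b - a) ⬝ᵥ (b - a) = D ^ 2 := by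
          rw [hba, neg_dotProduct, dotProduct_neg, neg_neg, hDsq]
        have hnormu : e2norm u = 1 := by
          rw [hudef, e2norm_smul, hba, e2norm_neg, ← hDdef, abs_of_pos (inv_pos.mpr hDpos),
            inv_mul_cancel₀ (ne_of_gt hDpos)]
        have hDinv : 0 ≤ (D⁻¹ : ℝ) := inv_nonneg.mpr hD0
        have hu1 : ∀ z₁ ∈ S, u ⬝ᵥ z₁ ≤ u ⬝ᵥ a := by
          intro z₁ h₁
          have h := hsep1 z₁ h₁
          rw [dotProduct_sub] at h
          rw [hudef, smul_dotProduct, smul_dotProduct, smul_eq_mul, smul_eq_mul, hba,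
            neg_dotProduct, neg_dotProduct]
          nlinarith [h, hDinv]
        have hu2 : ∀ z₂ ∈ S', u ⬝ᵥ b ≤ u ⬝ᵥ z₂ := by
          intro z₂ h₂
          have h := hsep2 z₂ h₂
          rw [dotProduct_sub] at h
          rw [hudef, smul_dotProduct, smul_dotProduct, smul_eq_mul, smul_eq_mul]
          nlinarith [h, hDinv]
        have hbound1 : ∀ y, g - G *ᵥ y ∈ K → (Rᵀ *ᵥ u) ⬝ᵥ y ≤ u ⬝ᵥ a - u ⬝ᵥ p := by
          intro y hy
          have hz : R *ᵥ y + p ∈ S := ⟨y, hy, rfl⟩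
          have h := hu1 _ hz
          rw [dotProduct_add] at h
          have hadj1 : (Rᵀ *ᵥ u) ⬝ᵥ y = u ⬝ᵥ (R *ᵥ y) := by
            rw [adj_dot, transpose_transpose]
          rw [hadj1]
          linarith
        obtain ⟨lam, hlamK, hlamG, hlamg⟩ :=
          conic_farkas K hKconv hKcone G g hsf (Rᵀ *ᵥ u) (u ⬝ᵥ a - u ⬝ᵥ p) hbound1
        have hbound2 : ∀ y, g' - G' *ᵥ y ∈ K → (-(R'ᵀ *ᵥ u)) ⬝ᵥ y ≤ u ⬝ᵥ q - u ⬝ᵥ b := by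
          intro y hy
          have hz : R' *ᵥ y + q ∈ S' := ⟨y, hy, rfl⟩
          have h := hu2 _ hz
          rw [dotProduct_add] at h
          have hadj1 : (R'ᵀ *ᵥ u) ⬝ᵥ y = u ⬝ᵥ (R' *ᵥ y) := by
            rw [adj_dot, transpose_transpose]
          rw [neg_dotProduct, hadj1]
          linarith
        obtain ⟨nu, hnuK, hnuG, hnug⟩ :=
          conic_farkas K hKconv hKcone G' g' hsf' (-(R'ᵀ *ᵥ u)) (u ⬝ᵥ q - u ⬝ᵥ b) hbound2
        have hRu : R *ᵥ (Gᵀ *ᵥ lam) = u := by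
          rw [hlamG, mulVec_mulVec, hR, one_mulVec]
        have hRu' : R' *ᵥ (G'ᵀ *ᵥ nu) = -u := by
          rw [hnuG, mulVec_neg, mulVec_mulVec, hR', one_mulVec]
        refine ⟨lam, nu, hlamK, hnuK, ?_, ?_, ?_, ?_⟩
        · rw [hRu]; exact le_of_eq hnormu
        · rw [hRu', e2norm_neg]; exact le_of_eq hnormu
        · rw [hRu, hRu']; simp
        · have hup : lam ⬝ᵥ (G *ᵥ (Rᵀ *ᵥ p)) = u ⬝ᵥ p := by
            rw [dotProduct_mulVec, ← mulVec_transpose, hlamG, adj_dot, transpose_transpose,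
              mulVec_mulVec, hR, one_mulVec]
          have huq : nu ⬝ᵥ (G' *ᵥ (R'ᵀ *ᵥ q)) = -(u ⬝ᵥ q) := by
            rw [dotProduct_mulVec, ← mulVec_transpose, hnuG, neg_dotProduct, adj_dot,
              transpose_transpose, mulVec_mulVec, hR', one_mulVec]
          have hDval : u ⬝ᵥ (b - a) = D := by
            rw [hudef, smul_dotProduct, smul_eq_mul, hbadot, sq, ← mul_assoc,
              inv_mul_cancel₀ (ne_of_gt hDpos), one_mul]
          have hge : D ≤ -(lam ⬝ᵥ (G *ᵥ (Rᵀ *ᵥ p) + g)) - nu ⬝ᵥ (G' *ᵥ (R'ᵀ *ᵥ q) + g') := by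
            rw [dotProduct_add, dotProduct_add, hup, huq]
            rw [dotProduct_sub] at hDval
            linarith
          have hle : -(lam ⬝ᵥ (G *ᵥ (Rᵀ *ᵥ p) + g)) - nu ⬝ᵥ (G' *ᵥ (R'ᵀ *ᵥ q) + g') ≤ D := by
            have := wd lam nu hlamK hnuK (by rw [hRu]; exact le_of_eq hnormu)
              (by rw [hRu, hRu']; simp) a ha b hb
            rw [← hDdef] at this
            exact this
          exact le_antisymm hge hle
    · rintro x ⟨lam, nu, hl, hn, h1, h2, hsum, rfl⟩
      exact wd lam nu hl hn h1 hsum a ha b hb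
  exact hPleast.csInf_eq.trans hQgreatest.csSup_eq.symm
end

section
/- Let m ∈ ℕ, let Γ be an invertible m×m real matrix, let γ > 0, a ∈ ℝ^m and b ∈ ℝ. Then the strict affine inequality b + ⟨a, v⟩ > 0 holds for every v ∈ ℝ^m with ‖Γ v‖_∞ ≤ γ if and only if b > γ ‖(Γ⁻¹)ᵀ a‖₁. -/
open Matrix

/-- ℓ1 norm on `Fin m → ℝ`. -/
def l1norm {m : ℕ} (x : Fin m → ℝ) : ℝ := ∑ i, |x i|

/-- ℓ∞ norm on `Fin m → ℝ`. -/
noncomputable def linfnorm {m : ℕ} (x : Fin m → ℝ) : ℝ := ⨆ i, |x i|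

lemma abs_le_linfnorm {m : ℕ} (x : Fin m → ℝ) (i : Fin m) : |x i| ≤ linfnorm x := by
  unfold linfnorm
  exact le_ciSup (Set.Finite.bddAbove (Set.finite_range fun j => |x j|)) i

lemma linfnorm_le {m : ℕ} (x : Fin m → ℝ) (c : ℝ) (hc : 0 ≤ c)
    (h : ∀ i, |x i| ≤ c) : linfnorm x ≤ c := by
  unfold linfnorm
  rcases isEmpty_or_nonempty (Fin m) with h0 | h0
  · simpa [ciSup_of_empty] using hc
  · exact ciSup_le h

theorem robust_strict_affine_inequality {m : ℕ} (Γ : Matrix (Fin m) (Fin m) ℝ)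
    (hΓ : IsUnit Γ.det) (γ : ℝ) (hγ : 0 < γ) (a : Fin m → ℝ) (b : ℝ) :
    (∀ v : Fin m → ℝ, linfnorm (Γ *ᵥ v) ≤ γ → 0 < b + a ⬝ᵥ v) ↔
      γ * l1norm ((Γ⁻¹)ᵀ *ᵥ a) < b := by
  set c : Fin m → ℝ := (Γ⁻¹)ᵀ *ᵥ a with hcdef
  have key : ∀ w : Fin m → ℝ, a ⬝ᵥ (Γ⁻¹ *ᵥ w) = c ⬝ᵥ w := by
    intro w
    rw [hcdef, Matrix.mulVec_transpose, Matrix.dotProduct_mulVec]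
  constructor
  · intro h
    set w : Fin m → ℝ := fun i => if 0 ≤ c i then -γ else γ with hw
    have hΓw : Γ *ᵥ (Γ⁻¹ *ᵥ w) = w := by
      rw [Matrix.mulVec_mulVec, Matrix.mul_nonsing_inv _ hΓ, Matrix.one_mulVec]
    have habs : ∀ i, |w i| = γ := by
      intro i
      rw [hw]
      dsimp only
      split_ifs <;> simp [abs_of_pos hγ]
    have hle : linfnorm (Γ *ᵥ (Γ⁻¹ *ᵥ w)) ≤ γ := by
      rw [hΓw]
      exact linfnorm_le _ _ hγ.le (fun i => (habs i).le)
    have h0 := h _ hle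
    rw [key] at h0
    have hdot : c ⬝ᵥ w = -(γ * l1norm c) := by
      rw [dotProduct, l1norm, Finset.mul_sum, ← Finset.sum_neg_distrib]
      apply Finset.sum_congr rfl
      intro i _
      rw [hw]
      by_cases hci : 0 ≤ c i
      · simp [hci, abs_of_nonneg hci]; ring
      · push_neg at hci
        simp [not_le.mpr hci, abs_of_neg hci]; ring
    rw [hdot] at h0
    linarith
  · intro hb v hv
    rw [show a ⬝ᵥ v = c ⬝ᵥ (Γ *ᵥ v) by
      rw [← key (Γ *ᵥ v), Matrix.mulVec_mulVec, Matrix.nonsing_inv_mul _ hΓ,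
        Matrix.one_mulVec]]
    have hbound : -(γ * l1norm c) ≤ c ⬝ᵥ (Γ *ᵥ v) := by
      have : |c ⬝ᵥ (Γ *ᵥ v)| ≤ γ * l1norm c := by
        calc |c ⬝ᵥ (Γ *ᵥ v)| ≤ ∑ i, |c i * (Γ *ᵥ v) i| :=
              Finset.abs_sum_le_sum_abs _ _
          _ ≤ ∑ i, |c i| * γ := by
              apply Finset.sum_le_sum
              intro i _
              rw [abs_mul]
              exact mul_le_mul_of_nonneg_left
                ((abs_le_linfnorm (Γ *ᵥ v) i).trans hv) (abs_nonneg _)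
          _ = γ * l1norm c := by
              rw [l1norm, Finset.mul_sum]
              exact Finset.sum_congr rfl fun i _ => mul_comm _ _
      linarith [(abs_le.mp this).1]
    linarith
end

section
/- Let m ∈ ℕ, let Γ be an invertible m×m real matrix, let γ > 0, a ∈ ℝ^m and b ∈ ℝ. Then the affine inequality b + ⟨a, v⟩ ≥ 0 holds for every v ∈ ℝ^m with ‖Γ v‖_∞ ≤ γ if and only if b ≥ γ ‖(Γ⁻¹)ᵀ a‖₁. -/
open Matrix

theorem robust_affine_inequality {m : ℕ} (Γ : Matrix (Fin m) (Fin m) ℝ)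
    (hΓ : IsUnit Γ.det) (γ : ℝ) (hγ : 0 < γ) (a : Fin m → ℝ) (b : ℝ) :
    (∀ v : Fin m → ℝ, linfnorm (Γ *ᵥ v) ≤ γ → 0 ≤ b + a ⬝ᵥ v) ↔
      γ * l1norm ((Γ⁻¹)ᵀ *ᵥ a) ≤ b := by
  set c : Fin m → ℝ := (Γ⁻¹)ᵀ *ᵥ a with hc
  have hdot : ∀ w : Fin m → ℝ, a ⬝ᵥ (Γ⁻¹ *ᵥ w) = c ⬝ᵥ w := by
    intro w
    rw [hc, Matrix.mulVec_transpose, Matrix.dotProduct_mulVec]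
  constructor
  · intro h
    set w : Fin m → ℝ := fun i => -γ * (if 0 ≤ c i then 1 else -1) with hw
    have hwb : ∀ i, |w i| = γ := by
      intro i
      simp only [hw]
      split <;> simp [abs_of_pos hγ, abs_mul, hγ.le]
    have hlin : linfnorm (Γ *ᵥ (Γ⁻¹ *ᵥ w)) ≤ γ := by
      rw [Matrix.mulVec_mulVec, Matrix.mul_nonsing_inv _ hΓ, Matrix.one_mulVec]
      exact Real.iSup_le (fun i => by rw [hwb i]) hγ.le
    have := h _ hlin
    rw [hdot] at this
    have hcw : c ⬝ᵥ w = -γ * l1norm c := by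
      simp only [dotProduct, l1norm, hw, Finset.mul_sum]
      apply Finset.sum_congr rfl
      intro i _
      rcases le_or_gt 0 (c i) with h' | h'
      · rw [if_pos h', abs_of_nonneg h']; ring
      · rw [if_neg (not_le.mpr h'), abs_of_neg h']; ring
    rw [hcw] at this
    linarith
  · intro h v hv
    set w : Fin m → ℝ := Γ *ᵥ v with hw
    have hveq : v = Γ⁻¹ *ᵥ w := by
      rw [hw, Matrix.mulVec_mulVec, Matrix.nonsing_inv_mul _ hΓ, Matrix.one_mulVec]
    have hwle : ∀ i, |w i| ≤ γ := fun i => (abs_le_linfnorm w i).trans hv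
    have key : -γ * l1norm c ≤ c ⬝ᵥ w := by
      simp only [dotProduct, l1norm, neg_mul, Finset.mul_sum, neg_eq_iff_eq_neg.symm,
        ← Finset.sum_neg_distrib]
      apply Finset.sum_le_sum
      intro i _
      have : |c i * w i| ≤ γ * |c i| := by
        rw [abs_mul, mul_comm]
        exact mul_le_mul_of_nonneg_right (hwle i) (abs_nonneg _)
      nlinarith [neg_abs_le (c i * w i)]
    rw [hveq, hdot]
    nlinarith
end

section
/- Let G ∈ ℝ^{l×n}, g ∈ ℝ^l, g' ∈ ℝ^{l'}, let R ∈ ℝ^{n×n} be orthogonal, let P₁, P₂ ∈ ℝ^{n×m}, p̄, q̄ ∈ ℝ^n, λ ∈ ℝ^l, ν ∈ ℝ^{l'}, let Γ be an invertible m×m matrix and γ > 0. Define Y = −⟨λ, G Rᵀ (p̄ − q̄) + g⟩ − ⟨ν, g'⟩ and w = −(P₁ − P₂)ᵀ R Gᵀ λ ∈ ℝ^m. Then the dual collision-avoidance inequality −⟨λ, G Rᵀ ((p̄ + P₁ v) − (q̄ + P₂ v)) + g⟩ − ⟨ν, g'⟩ > 0 holds for every v ∈ ℝ^m with ‖Γ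 v‖_∞ ≤ γ if and only if Y > γ ‖(Γ⁻¹)ᵀ w‖₁. -/
open Matrix

private lemma helperT {a b : ℕ} (A : Matrix (Fin a) (Fin b) ℝ) (x : Fin a → ℝ) (y : Fin b → ℝ) :
    (Aᵀ *ᵥ x) ⬝ᵥ y = x ⬝ᵥ (A *ᵥ y) := by
  rw [Matrix.mulVec_transpose, Matrix.dotProduct_mulVec]

theorem robust_dual_collision_avoidance_reformulation {n l l' m : ℕ}
    (G : Matrix (Fin l) (Fin n) ℝ) (g : Fin l → ℝ) (g' : Fin l' → ℝ)
    (R : Matrix (Fin n) (Fin n) ℝ) (hR : R * Rᵀ = 1)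
    (P₁ P₂ : Matrix (Fin n) (Fin m) ℝ) (pbar qbar : Fin n → ℝ)
    (lam : Fin l → ℝ) (nu : Fin l' → ℝ)
    (Γ : Matrix (Fin m) (Fin m) ℝ) (hΓ : IsUnit Γ.det) (γ : ℝ) (hγ : 0 < γ)
    (Y : ℝ) (hY : Y = -(lam ⬝ᵥ (G *ᵥ (Rᵀ *ᵥ (pbar - qbar)) + g)) - nu ⬝ᵥ g')
    (w : Fin m → ℝ) (hw : w = -((P₁ - P₂)ᵀ *ᵥ (R *ᵥ (Gᵀ *ᵥ lam)))) :
    (∀ v : Fin m → ℝ, linfnorm (Γ *ᵥ v) ≤ γ →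
        0 < -(lam ⬝ᵥ (G *ᵥ (Rᵀ *ᵥ ((pbar + P₁ *ᵥ v) - (qbar + P₂ *ᵥ v))) + g)) - nu ⬝ᵥ g') ↔
      γ * l1norm ((Γ⁻¹)ᵀ *ᵥ w) < Y := by
  set c : Fin m → ℝ := (Γ⁻¹)ᵀ *ᵥ w with hc
  have h3 : ∀ z : Fin n → ℝ, (R *ᵥ (Gᵀ *ᵥ lam)) ⬝ᵥ z = lam ⬝ᵥ (G *ᵥ (Rᵀ *ᵥ z)) := by
    intro z
    rw [← helperT G lam (Rᵀ *ᵥ z), dotProduct_comm, ← helperT R z, dotProduct_comm]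
  have key : ∀ v : Fin m → ℝ,
      -(lam ⬝ᵥ (G *ᵥ (Rᵀ *ᵥ ((pbar + P₁ *ᵥ v) - (qbar + P₂ *ᵥ v))) + g)) - nu ⬝ᵥ g'
        = Y + w ⬝ᵥ v := by
    intro v
    have h1 : (pbar + P₁ *ᵥ v) - (qbar + P₂ *ᵥ v) = (pbar - qbar) + (P₁ - P₂) *ᵥ v := by
      rw [Matrix.sub_mulVec]; abel
    have h2 : w ⬝ᵥ v = -(lam ⬝ᵥ (G *ᵥ (Rᵀ *ᵥ ((P₁ - P₂) *ᵥ v)))) := by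
      rw [hw, neg_dotProduct, helperT, h3]
    rw [h1, hY, h2, Matrix.mulVec_add, Matrix.mulVec_add]
    simp only [dotProduct_add]
    ring
  have hΓinv : ∀ u : Fin m → ℝ, Γ *ᵥ (Γ⁻¹ *ᵥ u) = u := by
    intro u
    rw [Matrix.mulVec_mulVec, Matrix.mul_nonsing_inv _ hΓ, Matrix.one_mulVec]
  have hinvΓ : ∀ u : Fin m → ℝ, Γ⁻¹ *ᵥ (Γ *ᵥ u) = u := by
    intro u
    rw [Matrix.mulVec_mulVec, Matrix.nonsing_inv_mul _ hΓ, Matrix.one_mulVec]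
  have hwc : ∀ v : Fin m → ℝ, w ⬝ᵥ v = c ⬝ᵥ (Γ *ᵥ v) := by
    intro v
    rw [hc, helperT, hinvΓ]
  constructor
  · intro H
    set u : Fin m → ℝ := fun i => -γ * Real.sign (c i) with hu
    have husmall : ∀ i, |u i| ≤ γ := by
      intro i
      rcases lt_trichotomy (c i) 0 with h | h | h
      · simp [hu, Real.sign_of_neg h, abs_of_pos hγ]
      · simp [hu, h, hγ.le]
      · simp [hu, Real.sign_of_pos h, abs_of_pos hγ]
    have hcu : c ⬝ᵥ u = -(γ * l1norm c) := by
      rw [dotProduct, l1norm, Finset.mul_sum, ← Finset.sum_neg_distrib]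
      apply Finset.sum_congr rfl
      intro i _
      rcases lt_trichotomy (c i) 0 with h | h | h
      · simp only [hu, Real.sign_of_neg h, abs_of_neg h]; ring
      · simp [hu, h]
      · simp only [hu, Real.sign_of_pos h, abs_of_pos h]; ring
    have hb := H (Γ⁻¹ *ᵥ u) ?_
    · rw [key, hwc, hΓinv, hcu] at hb
      linarith
    · rw [hΓinv, linfnorm]
      exact Real.iSup_le (fun i => husmall i) hγ.le
  · intro H v hv
    rw [key, hwc]
    rw [linfnorm] at hv
    have hbd : ∀ i, |(Γ *ᵥ v) i| ≤ γ := by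
      intro i
      exact le_trans (le_ciSup (f := fun i => |(Γ *ᵥ v) i|)
        (Set.Finite.bddAbove (Set.finite_range _)) i) hv
    have habs : |c ⬝ᵥ (Γ *ᵥ v)| ≤ γ * l1norm c := by
      rw [dotProduct, l1norm, Finset.mul_sum]
      refine le_trans (Finset.abs_sum_le_sum_abs _ _) (Finset.sum_le_sum ?_)
      intro i _
      rw [abs_mul, mul_comm]
      exact mul_le_mul (hbd i) le_rfl (abs_nonneg _) hγ.le
    have := neg_abs_le (c ⬝ᵥ (Γ *ᵥ v))
    linarith
end

section
/- Let S(G, g, R, ·) and S(G', g', R', ·) be cone-represented set families in ℝ^n for the same closed convex cone K ⊆ ℝ^l. Let P₁, P₂ ∈ ℝ^{n×m}, p̄, q̄ ∈ ℝ^n, let Γ be an invertible m×m matrix and γ > 0. Suppose there exist λ, ν ∈ K* with ‖R Gᵀ λ‖₂ ≤ 1, R Gᵀ λ = −R' G'ᵀ ν, and Y > γ ‖(Γ⁻¹)ᵀ w‖₁, where Y = −⟨λ, G Rᵀ (p̄ − q̄) + g⟩ − ⟨ν, g'⟩ and w = −(P₁ − P₂)ᵀ R Gᵀ λ. Then for every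 disturbance v ∈ ℝ^m with ‖Γ v‖_∞ ≤ γ, the sets S(G, g, R, p̄ + P₁ v) and S(G', g', R', q̄ + P₂ v) are disjoint. -/
open Matrix

lemma dotmv {a b : ℕ} (M : Matrix (Fin a) (Fin b) ℝ) (x : Fin b → ℝ) (y : Fin a → ℝ) :
    (M *ᵥ x) ⬝ᵥ y = x ⬝ᵥ (Mᵀ *ᵥ y) := by
  simp only [dotProduct, Matrix.mulVec, Matrix.transpose_apply, Finset.sum_mul, Finset.mul_sum]
  rw [Finset.sum_comm]
  apply Finset.sum_congr rfl; intros; apply Finset.sum_congr rfl; intros; ring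

lemma hoelder {m : ℕ} (u s : Fin m → ℝ) (γ : ℝ) (h : ∀ i, |s i| ≤ γ) :
    u ⬝ᵥ s ≤ γ * (∑ i, |u i|) := by
  calc u ⬝ᵥ s ≤ ∑ i, |u i * s i| := Finset.sum_le_sum fun i _ => le_abs_self _
    _ = ∑ i, |u i| * |s i| := by simp [abs_mul]
    _ ≤ ∑ i, |u i| * γ := Finset.sum_le_sum fun i _ =>
        mul_le_mul_of_nonneg_left (h i) (abs_nonneg _)
    _ = γ * ∑ i, |u i| := by rw [Finset.mul_sum]; simp [mul_comm]

theorem robust_collision_avoidance {n l m : ℕ} (K : Set (Fin l → ℝ))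
    (hKclosed : IsClosed K) (hKconv : Convex ℝ K)
    (hKcone : ∀ c : ℝ, 0 < c → ∀ x ∈ K, c • x ∈ K)
    (hKint : (interior K).Nonempty)
    (G G' : Matrix (Fin l) (Fin n) ℝ) (g g' : Fin l → ℝ)
    (R R' : Matrix (Fin n) (Fin n) ℝ)
    (hR : R * Rᵀ = 1) (hR' : R' * R'ᵀ = 1)
    (P₁ P₂ : Matrix (Fin n) (Fin m) ℝ) (pbar qbar : Fin n → ℝ)
    (Γ : Matrix (Fin m) (Fin m) ℝ) (hΓ : IsUnit Γ.det) (γ : ℝ) (hγ : 0 < γ)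
    (hfeas : ∃ lam nu, lam ∈ dualCone K ∧ nu ∈ dualCone K ∧
      e2norm (R *ᵥ (Gᵀ *ᵥ lam)) ≤ 1 ∧
      R *ᵥ (Gᵀ *ᵥ lam) = -(R' *ᵥ (G'ᵀ *ᵥ nu)) ∧
      γ * l1norm ((Γ⁻¹)ᵀ *ᵥ (-((P₁ - P₂)ᵀ *ᵥ (R *ᵥ (Gᵀ *ᵥ lam))))) <
        -(lam ⬝ᵥ (G *ᵥ (Rᵀ *ᵥ (pbar - qbar)) + g)) - nu ⬝ᵥ g') :
    ∀ v : Fin m → ℝ, linfnorm (Γ *ᵥ v) ≤ γ →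
      coneSet K G g R (pbar + P₁ *ᵥ v) ∩ coneSet K G' g' R' (qbar + P₂ *ᵥ v) = ∅ := by
  intro v hv
  rw [Set.eq_empty_iff_forall_notMem]
  rintro z ⟨⟨y, hy, hz⟩, ⟨y', hy', hz'⟩⟩
  obtain ⟨lam, nu, hlam, hnu, -, heq, hY⟩ := hfeas
  have hRtR : Rᵀ * R = 1 := mul_eq_one_comm.mp hR
  have hR'tR' : R'ᵀ * R' = 1 := mul_eq_one_comm.mp hR'
  set a := R *ᵥ (Gᵀ *ᵥ lam) with ha
  -- key adjoint identities
  have key : ∀ u : Fin n → ℝ, a ⬝ᵥ (R *ᵥ u) = lam ⬝ᵥ (G *ᵥ u) := by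
    intro u
    rw [ha, dotmv, Matrix.mulVec_mulVec, hRtR, Matrix.one_mulVec,
      dotProduct_comm, ← dotmv, dotProduct_comm]
  have key' : ∀ u : Fin n → ℝ, (R' *ᵥ (G'ᵀ *ᵥ nu)) ⬝ᵥ (R' *ᵥ u) = nu ⬝ᵥ (G' *ᵥ u) := by
    intro u
    rw [dotmv, Matrix.mulVec_mulVec, hR'tR', Matrix.one_mulVec,
      dotProduct_comm, ← dotmv, dotProduct_comm]
  -- dual cone inequalities
  have e1 : a ⬝ᵥ (R *ᵥ y) ≤ lam ⬝ᵥ g := by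
    have h0 : 0 ≤ lam ⬝ᵥ (g - G *ᵥ y) := hlam _ hy
    rw [dotProduct_sub] at h0
    rw [key]; linarith
  have e2 : -(a ⬝ᵥ (R' *ᵥ y')) ≤ nu ⬝ᵥ g' := by
    have h0 : 0 ≤ nu ⬝ᵥ (g' - G' *ᵥ y') := hnu _ hy'
    rw [dotProduct_sub] at h0
    have : a ⬝ᵥ (R' *ᵥ y') = -(nu ⬝ᵥ (G' *ᵥ y')) := by
      rw [heq, neg_dotProduct, key']
    rw [this]; linarith
  -- express dot products with z
  have e3 : a ⬝ᵥ z = a ⬝ᵥ (R *ᵥ y) + a ⬝ᵥ pbar + a ⬝ᵥ (P₁ *ᵥ v) := by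
    rw [hz]
    simp [dotProduct_add]
    ring
  have e4 : a ⬝ᵥ z = a ⬝ᵥ (R' *ᵥ y') + a ⬝ᵥ qbar + a ⬝ᵥ (P₂ *ᵥ v) := by
    rw [hz']
    simp [dotProduct_add]
    ring
  -- rewrite the Y expression
  have e5 : lam ⬝ᵥ (G *ᵥ (Rᵀ *ᵥ (pbar - qbar)) + g)
      = a ⬝ᵥ pbar - a ⬝ᵥ qbar + lam ⬝ᵥ g := by
    rw [dotProduct_add, ← key, Matrix.mulVec_mulVec, hR, Matrix.one_mulVec,
      dotProduct_sub]
  -- the disturbance term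
  have step2 : Γ⁻¹ *ᵥ (Γ *ᵥ v) = v := by
    rw [Matrix.mulVec_mulVec, Matrix.nonsing_inv_mul _ hΓ, Matrix.one_mulVec]
  have e6 : ((Γ⁻¹)ᵀ *ᵥ (-((P₁ - P₂)ᵀ *ᵥ a))) ⬝ᵥ (Γ *ᵥ v)
      = -(a ⬝ᵥ (P₁ *ᵥ v)) + a ⬝ᵥ (P₂ *ᵥ v) := by
    rw [dotmv, Matrix.transpose_transpose, step2, neg_dotProduct,
      dotmv, Matrix.transpose_transpose, Matrix.sub_mulVec, dotProduct_sub]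
    ring
  -- Hölder lower bound
  have hv' : ⨆ i, |(Γ *ᵥ v) i| ≤ γ := hv
  have habs : ∀ i, |(Γ *ᵥ v) i| ≤ γ := fun i =>
    le_trans (le_ciSup (Set.Finite.bddAbove (Set.finite_range fun j => |(Γ *ᵥ v) j|)) i) hv'
  have e7 : -(γ * l1norm ((Γ⁻¹)ᵀ *ᵥ (-((P₁ - P₂)ᵀ *ᵥ a))))
      ≤ ((Γ⁻¹)ᵀ *ᵥ (-((P₁ - P₂)ᵀ *ᵥ a))) ⬝ᵥ (Γ *ᵥ v) := by
    have h := hoelder (-((Γ⁻¹)ᵀ *ᵥ (-((P₁ - P₂)ᵀ *ᵥ a)))) (Γ *ᵥ v) γ habs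
    rw [neg_dotProduct] at h
    have hsum : (∑ i, |(-((Γ⁻¹)ᵀ *ᵥ (-((P₁ - P₂)ᵀ *ᵥ a)))) i|)
        = l1norm ((Γ⁻¹)ᵀ *ᵥ (-((P₁ - P₂)ᵀ *ᵥ a))) := by
      simp [l1norm]
    rw [hsum] at h
    linarith
  rw [e5] at hY
  rw [e6] at e7
  linarith
end

section
/- Let σ ≥ 0, ε ∈ (0, 1), and b ∈ ℝ with b > √((1 − ε)/ε) · σ. Then every probability measure μ on ℝ with mean zero (∫ x dμ(x) = 0) and second moment σ² (∫ x² dμ(x) = σ²) satisfies μ({x ∈ ℝ : b + x > 0}) ≥ 1 − ε. -/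
/-!
Cantelli's one-sided Chebyshev inequality: for a centred `X` with second moment `v` and `b > 0`,
Markov's inequality applied to `(v / b - X)²` gives `P(X ≤ -b) ≤ v / (v + b²)`.
The hypothesis on `b` says exactly `(1 - ε) σ² < ε b²`, i.e. `σ² / (σ² + b²) < ε`.
-/

open MeasureTheory

section Cantelli

variable {Ω : Type*} [MeasurableSpace Ω] {μ : Measure Ω} {X : Ω → ℝ}

theorem integrable_const_sub_sq [IsFiniteMeasure μ] (hX : Integrable X μ)
    (hX2 : Integrable (fun ω => X ω ^ 2) μ) (t : ℝ) :
    Integrable (fun ω => (t - X ω) ^ 2) μ :=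
  (((integrable_const (t ^ 2)).sub (hX.const_mul (2 * t))).add hX2).congr
    (Filter.Eventually.of_forall fun ω => by simp only [Pi.add_apply, Pi.sub_apply]; ring)

variable [IsProbabilityMeasure μ]

theorem integral_const_sub_sq_of_integral_eq_zero (hX : Integrable X μ)
    (hX2 : Integrable (fun ω => X ω ^ 2) μ) (hmean : ∫ ω, X ω ∂μ = 0) (t : ℝ) :
    ∫ ω, (t - X ω) ^ 2 ∂μ = t ^ 2 + ∫ ω, X ω ^ 2 ∂μ := by
  have hlin : Integrable (fun ω => t ^ 2 - 2 * t * X ω) μ :=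
    (integrable_const _).sub (hX.const_mul _)
  calc ∫ ω, (t - X ω) ^ 2 ∂μ = ∫ ω, (t ^ 2 - 2 * t * X ω + X ω ^ 2) ∂μ := by
        congr 1; funext ω; ring
    _ = t ^ 2 - 2 * t * ∫ ω, X ω ∂μ + ∫ ω, X ω ^ 2 ∂μ := by
        rw [integral_add hlin hX2, integral_sub (integrable_const _) (hX.const_mul _),
          integral_const_mul, integral_const, probReal_univ, one_smul]
    _ = t ^ 2 + ∫ ω, X ω ^ 2 ∂μ := by rw [hmean]; ring

theorem measureReal_le_neg_le_div_add_sq (hX : Integrable X μ)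
    (hX2 : Integrable (fun ω => X ω ^ 2) μ) (hmean : ∫ ω, X ω ∂μ = 0) {b : ℝ} (hb : 0 < b) :
    μ.real {ω | X ω ≤ -b} ≤ (∫ ω, X ω ^ 2 ∂μ) / (∫ ω, X ω ^ 2 ∂μ + b ^ 2) := by
  set v := ∫ ω, X ω ^ 2 ∂μ
  have hv : 0 ≤ v := integral_nonneg fun ω => sq_nonneg (X ω)
  set t := v / b with ht
  have hsub : {ω | X ω ≤ -b} ⊆ {ω | (b + t) ^ 2 ≤ (t - X ω) ^ 2} := fun ω hω => by
    have : b + t ≤ t - X ω := by linarith [show X ω ≤ -b from hω]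
    exact pow_le_pow_left₀ (by positivity) this 2
  have hmarkov : (b + t) ^ 2 * μ.real {ω | (b + t) ^ 2 ≤ (t - X ω) ^ 2} ≤ t ^ 2 + v := by
    rw [← integral_const_sub_sq_of_integral_eq_zero hX hX2 hmean]
    exact mul_meas_ge_le_integral_of_nonneg (Filter.Eventually.of_forall fun ω => sq_nonneg _)
      (integrable_const_sub_sq hX hX2 t) _
  calc μ.real {ω | X ω ≤ -b} ≤ μ.real {ω | (b + t) ^ 2 ≤ (t - X ω) ^ 2} := measureReal_mono hsub
    _ ≤ (t ^ 2 + v) / (b + t) ^ 2 := by rw [le_div_iff₀ (by positivity)]; linarith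
    _ = v / (v + b ^ 2) := by rw [ht]; field_simp; ring

end Cantelli

theorem sq_div_sq_add_sq_lt_of_sqrt_mul_lt {σ ε b : ℝ} (hσ : 0 ≤ σ) (hε : 0 < ε)
    (hb : √((1 - ε) / ε) * σ < b) : σ ^ 2 / (σ ^ 2 + b ^ 2) < ε := by
  have hb0 : 0 < b := (mul_nonneg (Real.sqrt_nonneg _) hσ).trans_lt hb
  have hsq : (1 - ε) / ε * σ ^ 2 < b ^ 2 := by
    rwa [← Real.sqrt_lt' hb0, Real.sqrt_mul' _ (sq_nonneg σ), Real.sqrt_sq hσ]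
  rw [div_mul_eq_mul_div, div_lt_iff₀ hε] at hsq
  rw [div_lt_iff₀ (by positivity)]
  linarith

theorem distributionally_robust_chance_constraint {σ : ℝ} (hσ : 0 ≤ σ)
    {ε : ℝ} (hε : ε ∈ Set.Ioo (0 : ℝ) 1) (b : ℝ)
    (hb : Real.sqrt ((1 - ε) / ε) * σ < b)
    (μ : Measure ℝ) [IsProbabilityMeasure μ]
    (hint1 : Integrable (fun x : ℝ => x) μ)
    (hint2 : Integrable (fun x : ℝ => x ^ 2) μ)
    (hmean : ∫ x, x ∂μ = 0) (hvar : ∫ x, x ^ 2 ∂μ = σ ^ 2) :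
    ENNReal.ofReal (1 - ε) ≤ μ {x : ℝ | 0 < b + x} := by
  have hb0 : 0 < b := (mul_nonneg (Real.sqrt_nonneg _) hσ).trans_lt hb
  have htail : μ.real (Set.Iic (-b)) < ε := by
    refine (measureReal_le_neg_le_div_add_sq hint1 hint2 hmean hb0).trans_lt ?_
    rw [hvar]
    exact sq_div_sq_add_sq_lt_of_sqrt_mul_lt hσ hε.1 hb
  have hset : {x : ℝ | 0 < b + x} = (Set.Iic (-b))ᶜ := by
    ext x
    simp [neg_lt_iff_pos_add, add_comm]
  rw [hset, ← ofReal_measureReal, probReal_compl_eq_one_sub measurableSet_Iic]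
  exact ENNReal.ofReal_le_ofReal (by linarith)
end

section
/- Let S(G, g, R, ·) and S(G', g', R', ·) be cone-represented set families in ℝ^n for the same closed convex cone K ⊆ ℝ^l, let P₁, P₂ ∈ ℝ^{n×m} and p̄, q̄ ∈ ℝ^n. Suppose λ, ν ∈ K* satisfy ‖R Gᵀ λ‖₂ ≤ 1 and R Gᵀ λ = −R' G'ᵀ ν; set Y = −⟨λ, G Rᵀ (p̄ − q̄) + g⟩ − ⟨ν, g'⟩ and w = −(P₁ − P₂)ᵀ R Gᵀ λ. Let ε ∈ (0, 1), s ≥ 0, and let μ be any probability measure on ℝ^m with ∫ ⟨w, v⟩ dμ(v) = 0 and ∫ ⟨w, v⟩² dμ(v) = s². If Y > √((1 − ε)/ε) · s, then μ({v ∈ ℝ^m : S(G, g, R, p̄ + P₁ v) ∩ S(G', g', R', q̄ + P₂ v) = ∅}) ≥ 1 − ε. -/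
open Matrix MeasureTheory

private lemma dot_trans {l n : ℕ} (A : Matrix (Fin l) (Fin n) ℝ) (u : Fin l → ℝ)
    (x : Fin n → ℝ) : u ⬝ᵥ (A *ᵥ x) = (Aᵀ *ᵥ u) ⬝ᵥ x := by
  simp [Matrix.dotProduct_mulVec, Matrix.mulVec_transpose]

private lemma dot_orth {n : ℕ} (R : Matrix (Fin n) (Fin n) ℝ) (hR : Rᵀ * R = 1)
    (u y : Fin n → ℝ) : (R *ᵥ u) ⬝ᵥ (R *ᵥ y) = u ⬝ᵥ y := by
  simp [Matrix.dotProduct_mulVec, ← Matrix.mulVec_transpose, Matrix.mulVec_mulVec, hR,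
    Matrix.one_mulVec]

/-- One-sided Chebyshev (Cantelli) inequality. -/
private lemma cantelli {α : Type*} [MeasurableSpace α] (μ : Measure α)
    [IsProbabilityMeasure μ] (X : α → ℝ) (h1 : Integrable X μ)
    (h2 : Integrable (fun v => (X v) ^ 2) μ) (hmean : ∫ v, X v ∂μ = 0)
    {s2 : ℝ} (hvar : ∫ v, (X v) ^ 2 ∂μ = s2) {t : ℝ} (ht : 0 < t) :
    (μ {v | t ≤ X v}).toReal ≤ s2 / (s2 + t ^ 2) := by
  have hs2 : 0 ≤ s2 := hvar ▸ integral_nonneg fun v => sq_nonneg _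
  set a : ℝ := s2 / t with ha_def
  have ha : 0 ≤ a := div_nonneg hs2 ht.le
  have hat : a * t = s2 := div_mul_cancel₀ s2 ht.ne'
  have hfun : (fun v => (X v + a) ^ 2) =
      fun v => (X v) ^ 2 + (2 * a * X v + a ^ 2) := by funext v; ring
  have hint : Integrable (fun v => (X v + a) ^ 2) μ := by
    rw [hfun]; exact h2.add ((h1.const_mul _).add (integrable_const _))
  have hg2 : Integrable (fun v => 2 * a * X v) μ := h1.const_mul (2 * a)
  have hg : Integrable (fun v => 2 * a * X v + a ^ 2) μ := hg2.add (integrable_const _)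
  have hI : ∫ v, (X v + a) ^ 2 ∂μ = s2 + a ^ 2 := by
    rw [hfun, integral_add h2 hg, integral_add hg2 (integrable_const _),
      MeasureTheory.integral_const_mul, hmean, hvar, integral_const]
    simp
  have hsub : {v | t ≤ X v} ⊆ {v | (t + a) ^ 2 ≤ (X v + a) ^ 2} := by
    intro v hv
    simp only [Set.mem_setOf_eq] at hv ⊢
    nlinarith
  have hmarkov := mul_meas_ge_le_integral_of_nonneg
    (ae_of_all μ fun v => sq_nonneg (X v + a)) hint ((t + a) ^ 2)
  rw [hI] at hmarkov
  have hmono : (μ {v | t ≤ X v}).toReal ≤ (μ {x | (t + a) ^ 2 ≤ (X x + a) ^ 2}).toReal :=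
    ENNReal.toReal_mono (measure_ne_top μ _) (measure_mono hsub)
  set P := (μ {v | t ≤ X v}).toReal with hP_def
  have hP0 : 0 ≤ P := ENNReal.toReal_nonneg
  have hkey : (t + a) ^ 2 * P ≤ s2 + a ^ 2 := by
    calc (t + a) ^ 2 * P ≤ (t + a) ^ 2 * (μ {x | (t + a) ^ 2 ≤ (X x + a) ^ 2}).toReal :=
          mul_le_mul_of_nonneg_left hmono (sq_nonneg _)
      _ ≤ s2 + a ^ 2 := hmarkov
  have hpos : (0 : ℝ) < s2 + t ^ 2 := by positivity
  rw [le_div_iff₀ hpos]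
  have h4 : t ^ 2 * ((t + a) ^ 2 * P) ≤ t ^ 2 * (s2 + a ^ 2) :=
    mul_le_mul_of_nonneg_left hkey (sq_nonneg t)
  have e : t ^ 2 * (t + a) ^ 2 = (s2 + t ^ 2) ^ 2 := by
    rw [show t ^ 2 * (t + a) ^ 2 = (a * t + t ^ 2) ^ 2 from by ring, hat]
  have e2 : t ^ 2 * (s2 + a ^ 2) = s2 * (s2 + t ^ 2) := by
    rw [show t ^ 2 * (s2 + a ^ 2) = s2 * t ^ 2 + (a * t) ^ 2 from by ring, hat]; ring
  have h3 : (s2 + t ^ 2) ^ 2 * P ≤ s2 * (s2 + t ^ 2) := by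
    calc (s2 + t ^ 2) ^ 2 * P = t ^ 2 * ((t + a) ^ 2 * P) := by rw [← e]; ring
      _ ≤ t ^ 2 * (s2 + a ^ 2) := h4
      _ = s2 * (s2 + t ^ 2) := e2
  refine le_of_mul_le_mul_left ?_ hpos
  calc (s2 + t ^ 2) * (P * (s2 + t ^ 2)) = (s2 + t ^ 2) ^ 2 * P := by ring
    _ ≤ s2 * (s2 + t ^ 2) := h3
    _ = (s2 + t ^ 2) * s2 := by ring

theorem distributionally_robust_collision_avoidance {n l m : ℕ} (K : Set (Fin l → ℝ))
    (hKclosed : IsClosed K) (hKconv : Convex ℝ K)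
    (hKcone : ∀ c : ℝ, 0 < c → ∀ x ∈ K, c • x ∈ K)
    (hKint : (interior K).Nonempty)
    (G G' : Matrix (Fin l) (Fin n) ℝ) (g g' : Fin l → ℝ)
    (R R' : Matrix (Fin n) (Fin n) ℝ)
    (hR : R * Rᵀ = 1) (hR' : R' * R'ᵀ = 1)
    (P₁ P₂ : Matrix (Fin n) (Fin m) ℝ) (pbar qbar : Fin n → ℝ)
    (lam nu : Fin l → ℝ) (hlam : lam ∈ dualCone K) (hnu : nu ∈ dualCone K)
    (hnorm : e2norm (R *ᵥ (Gᵀ *ᵥ lam)) ≤ 1)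
    (heq : R *ᵥ (Gᵀ *ᵥ lam) = -(R' *ᵥ (G'ᵀ *ᵥ nu)))
    (Y : ℝ) (hY : Y = -(lam ⬝ᵥ (G *ᵥ (Rᵀ *ᵥ (pbar - qbar)) + g)) - nu ⬝ᵥ g')
    (w : Fin m → ℝ) (hw : w = -((P₁ - P₂)ᵀ *ᵥ (R *ᵥ (Gᵀ *ᵥ lam))))
    {ε : ℝ} (hε : ε ∈ Set.Ioo (0 : ℝ) 1) {s : ℝ} (hs : 0 ≤ s)
    (μ : Measure (Fin m → ℝ)) [IsProbabilityMeasure μ]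
    (hint1 : Integrable (fun v => w ⬝ᵥ v) μ)
    (hint2 : Integrable (fun v => (w ⬝ᵥ v) ^ 2) μ)
    (hmean : ∫ v, w ⬝ᵥ v ∂μ = 0) (hvar : ∫ v, (w ⬝ᵥ v) ^ 2 ∂μ = s ^ 2)
    (htight : Real.sqrt ((1 - ε) / ε) * s < Y) :
    ENNReal.ofReal (1 - ε) ≤
      μ {v : Fin m → ℝ |
        coneSet K G g R (pbar + P₁ *ᵥ v) ∩ coneSet K G' g' R' (qbar + P₂ *ᵥ v) = ∅} := by
  obtain ⟨hε0, hε1⟩ := hε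
  have hRtR : Rᵀ * R = 1 := mul_eq_one_comm.mp hR
  have hR'tR' : R'ᵀ * R' = 1 := mul_eq_one_comm.mp hR'
  have hY0 : 0 < Y :=
    lt_of_le_of_lt (mul_nonneg (Real.sqrt_nonneg _) hs) htight
  set a : Fin n → ℝ := R *ᵥ (Gᵀ *ᵥ lam) with ha_def
  set X : (Fin m → ℝ) → ℝ := fun v => -(w ⬝ᵥ v) with hX_def
  -- Step 1: if not (Y ≤ X v), the two sets intersect in no point
  have hkey : {v : Fin m → ℝ | Y ≤ X v}ᶜ ⊆
      {v : Fin m → ℝ |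
        coneSet K G g R (pbar + P₁ *ᵥ v) ∩ coneSet K G' g' R' (qbar + P₂ *ᵥ v) = ∅} := by
    intro v hv
    simp only [Set.mem_compl_iff, Set.mem_setOf_eq, not_le] at hv
    simp only [Set.mem_setOf_eq]
    by_contra h
    obtain ⟨z, ⟨y, hyK, hyz⟩, ⟨y', hy'K, hy'z⟩⟩ := Set.nonempty_iff_ne_empty.mpr h
    have h1 : 0 ≤ lam ⬝ᵥ (g - G *ᵥ y) := hlam _ hyK
    have h2 : 0 ≤ nu ⬝ᵥ (g' - G' *ᵥ y') := hnu _ hy'K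
    have hRy : R *ᵥ y = z - (pbar + P₁ *ᵥ v) := by rw [hyz]; abel
    have hR'y' : R' *ᵥ y' = z - (qbar + P₂ *ᵥ v) := by rw [hy'z]; abel
    have e1 : lam ⬝ᵥ (G *ᵥ y) = a ⬝ᵥ (z - (pbar + P₁ *ᵥ v)) := by
      rw [dot_trans, ← dot_orth R hRtR (Gᵀ *ᵥ lam) y, hRy]
    have e2 : nu ⬝ᵥ (G' *ᵥ y') = -(a ⬝ᵥ (z - (qbar + P₂ *ᵥ v))) := by
      rw [dot_trans, ← dot_orth R' hR'tR' (G'ᵀ *ᵥ nu) y', hR'y']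
      rw [show R' *ᵥ (G'ᵀ *ᵥ nu) = -a by rw [heq]; simp]
      simp only [neg_dotProduct, dotProduct_sub, dotProduct_add]
      ring
    have eY : Y = -(a ⬝ᵥ (pbar - qbar)) - lam ⬝ᵥ g - nu ⬝ᵥ g' := by
      rw [hY, dotProduct_add, dot_trans, dot_trans, Matrix.transpose_transpose]
      ring
    have ew : w ⬝ᵥ v = -(a ⬝ᵥ (P₁ *ᵥ v) - a ⬝ᵥ (P₂ *ᵥ v)) := by
      rw [hw, neg_dotProduct, ← dot_trans, Matrix.sub_mulVec, dotProduct_sub]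
    simp only [hX_def, ew] at hv
    simp only [dotProduct_sub, Set.mem_setOf_eq] at h1 h2 e1 e2 eY
    rw [dotProduct_add] at e1 e2
    linarith
  -- Step 2: Cantelli
  have hXmeas : Measurable X := by
    simp only [hX_def, dotProduct]
    fun_prop
  have hset : MeasurableSet {v : Fin m → ℝ | Y ≤ X v} :=
    measurableSet_le measurable_const hXmeas
  have hmean' : ∫ v, X v ∂μ = 0 := by
    simp only [hX_def]; rw [integral_neg, hmean, neg_zero]
  have hvar' : ∫ v, (X v) ^ 2 ∂μ = s ^ 2 := by
    simp only [hX_def, neg_sq]; exact hvar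
  have hcant := cantelli μ X hint1.neg (by simp only [hX_def, neg_sq]; exact hint2) hmean' hvar' hY0
  have hdnn : (0 : ℝ) ≤ (1 - ε) / ε := div_nonneg (by linarith) hε0.le
  have hge : 0 ≤ Real.sqrt ((1 - ε) / ε) * s := mul_nonneg (Real.sqrt_nonneg _) hs
  have hsq : (1 - ε) / ε * s ^ 2 < Y ^ 2 := by
    calc (1 - ε) / ε * s ^ 2 = (Real.sqrt ((1 - ε) / ε) * s) ^ 2 := by
          rw [mul_pow, Real.sq_sqrt hdnn]
      _ < Y ^ 2 := by nlinarith [htight, hge]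
  have hεb : s ^ 2 / (s ^ 2 + Y ^ 2) ≤ ε := by
    rw [div_le_iff₀ (by positivity)]
    have e : ε * ((1 - ε) / ε * s ^ 2) = (1 - ε) * s ^ 2 := by field_simp
    nlinarith [mul_lt_mul_of_pos_left hsq hε0, e]
  have hμε : μ {v : Fin m → ℝ | Y ≤ X v} ≤ ENNReal.ofReal ε := by
    rw [← ENNReal.ofReal_toReal (measure_ne_top μ _)]
    exact ENNReal.ofReal_le_ofReal (le_trans hcant hεb)
  calc ENNReal.ofReal (1 - ε) = 1 - ENNReal.ofReal ε := by
        rw [ENNReal.ofReal_sub _ hε0.le, ENNReal.ofReal_one]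
    _ ≤ 1 - μ {v : Fin m → ℝ | Y ≤ X v} := tsub_le_tsub_left hμε 1
    _ = μ {v : Fin m → ℝ | Y ≤ X v}ᶜ := (prob_compl_eq_one_sub hset).symm
    _ ≤ _ := measure_mono hkey
end
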